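/- arXiv:1804.05366 — 4 statements merged into one kernel-verified Lean document; each statement's English description precedes it below -/
import Mathlib

section
/- The Newton polygon of a product of monic polynomials over the ring of Puiseux series is the Minkowski sum of the Newton polygons of its factors. -/
open scoped Pointwise ENNReal

noncomputable section

namespace QOPaper

variable {K : Type*} [Field K] {d : ℕ}

/-! We model the ring `K[[X₁^{1/m},…,X_d^{1/m}]]` by `MvPowerSeries (Fin d) K`,
where the monomial with (natural) multi-exponent `a` is interpreted as `X^{a/m}`. -/

/-- The (rational) exponent vector represented by a monomial index, at scale `1/m`. -/
def expQ (m : ℕ) (a : Fin d →₀ ℕ) : Fin d → ℚ := fun i => (a i : ℚ) / m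

/-- `γ` lies in the subring `K[[X]] = K[[X₁,…,X_d]]` of `K[[X^{1/m}]]`. -/
def InKX (m : ℕ) (γ : MvPowerSeries (Fin d) K) : Prop :=
  ∀ a : Fin d →₀ ℕ, MvPowerSeries.coeff a γ ≠ 0 → ∀ i, m ∣ a i

/-- All coefficients of a polynomial lie in `K[[X]]`. -/
def PolyInKX (m : ℕ) (f : Polynomial (MvPowerSeries (Fin d) K)) : Prop :=
  ∀ b, InKX m (f.coeff b)

/-- `f` is a Weierstrass polynomial: monic of positive degree with all non-leading
coefficients vanishing at the origin. -/
def IsWeierstrass (f : Polynomial (MvPowerSeries (Fin d) K)) : Prop :=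
  f.Monic ∧ 0 < f.natDegree ∧
    ∀ i < f.natDegree, MvPowerSeries.constantCoeff (f.coeff i) = 0

/-- Irreducibility of a monic polynomial of `K[[X]][Y]` (viewed inside
`K[[X^{1/m}]][Y]`): it admits no factorization into two monic polynomials with
coefficients in `K[[X]]`, both of strictly smaller degree. -/
def IrreducibleOverKX (m : ℕ) (f : Polynomial (MvPowerSeries (Fin d) K)) : Prop :=
  0 < f.natDegree ∧
    ∀ g h : Polynomial (MvPowerSeries (Fin d) K), g.Monic → h.Monic →
      PolyInKX m g → PolyInKX m h → f = g * h → g.natDegree = 0 ∨ h.natDegree = 0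

/-- Newton polytope of a fractional power series (at scale `1/m`):
the convex hull of the union of the quadrants `a/m + ℝ_{≥0}^d` over the monomials
`X^{a/m}` appearing in `γ`. -/
def NewtonPolytope (m : ℕ) (γ : MvPowerSeries (Fin d) K) : Set (Fin d → ℝ) :=
  convexHull ℝ {p | ∃ a : Fin d →₀ ℕ, MvPowerSeries.coeff a γ ≠ 0 ∧
    ∀ i, ((a i : ℝ) / m) ≤ p i}

/-- The linear form `⟨c, ·⟩` on `ℝ^d` given by a rational vector `c`. -/
def innerQ (c : Fin d → ℚ) (v : Fin d → ℝ) : ℝ := ∑ i, (c i : ℝ) * v i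

/-- `l(c, Δ) = min_{w ∈ Δ} ⟨c, w⟩` (as an infimum). -/
def lval (c : Fin d → ℚ) (Δ : Set (Fin d → ℝ)) : ℝ := sInf (innerQ c '' Δ)

/-- The face `Δ^c` of `Δ` in the direction `c`. -/
def face (c : Fin d → ℚ) (Δ : Set (Fin d → ℝ)) : Set (Fin d → ℝ) :=
  {v ∈ Δ | innerQ c v = lval c Δ}

/-- The monomial substitution `X_i = T^{c_i}` applied to a fractional power series at
scale `1/m`: the resulting one-variable generalized (Puiseux) series, as a Hahn series
over `ℚ`.  Its coefficient at `q` is the (finite) sum of the coefficients of the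
monomials `X^{a/m}` with `⟨c, a/m⟩ = q`. -/
def substHahn (m : ℕ) (c : Fin d → ℚ) (hc : ∀ i, 0 ≤ c i) (γ : MvPowerSeries (Fin d) K) :
    HahnSeries ℚ K where
  coeff q := ∑ᶠ a ∈ {a : Fin d →₀ ℕ | (∑ i, c i * (a i : ℚ)) / m = q},
      MvPowerSeries.coeff a γ
  isPWO_support' := by
    have hmono : Monotone (fun a : Fin d →₀ ℕ => (∑ i, c i * (a i : ℚ)) / m) := by
      intro a b hab
      have : (∑ i, c i * (a i : ℚ)) ≤ ∑ i, c i * (b i : ℚ) := by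
        apply Finset.sum_le_sum
        intro i _
        have := hab i
        exact mul_le_mul_of_nonneg_left (by exact_mod_cast this) (hc i)
      simpa [div_eq_mul_inv] using
        mul_le_mul_of_nonneg_right this (by positivity : (0:ℚ) ≤ ((m:ℚ))⁻¹)
    have himg := Set.IsPWO.image_of_monotone
      (Set.isPWO_of_wellQuasiOrderedLE (Set.univ : Set (Fin d →₀ ℕ))) hmono
    apply himg.mono
    intro q hq
    by_contra hqn
    have hempty : {a : Fin d →₀ ℕ | (∑ i, c i * (a i : ℚ)) / m = q} = ∅ := by
      ext a
      simp only [Set.mem_setOf_eq, Set.mem_empty_iff_false, iff_false]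
      intro ha
      exact hqn ⟨a, Set.mem_univ a, ha⟩
    apply hq
    simp [hempty]

/-- Polynomial obtained from `f` by the monomial substitution `X_i = T^{c_i}`
applied to each coefficient: this is `f^{[c]}`. -/
def polySubst (m : ℕ) (c : Fin d → ℚ) (hc : ∀ i, 0 ≤ c i)
    (f : Polynomial (MvPowerSeries (Fin d) K)) : Polynomial (HahnSeries ℚ K) :=
  ∑ i ∈ f.support, Polynomial.C (substHahn m c hc (f.coeff i)) * Polynomial.X ^ i

/-- Newton polygon of a polynomial over one-variable generalized power series. -/
def hahnNP (g : Polynomial (HahnSeries ℚ K)) : Set (ℝ × ℝ) :=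
  convexHull ℝ {p | ∃ (q : ℚ) (b : ℕ), (g.coeff b).coeff q ≠ 0 ∧
    (q : ℝ) ≤ p.1 ∧ (b : ℝ) ≤ p.2}

/-- The lattice `M_i = ℤ^d + ℤh_1 + ⋯ + ℤh_i` inside `ℚ^d`. -/
def latticeM (h : ℕ → Fin d → ℚ) (i : ℕ) : AddSubgroup (Fin d → ℚ) :=
  AddSubgroup.closure
    ((Set.range fun v : Fin d => (Pi.single v (1 : ℚ))) ∪ h '' (Set.Icc 1 i))

/-- `n_i = [M_i : M_{i-1}]`. -/
def latIdx (h : ℕ → Fin d → ℚ) (i : ℕ) : ℕ := (latticeM h (i - 1)).relIndex (latticeM h i)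

/-- `e_i = n_{i+1} ⋯ n_{s+1}` (with `n_{s+1} = 1`). -/
def eIdx (h : ℕ → Fin d → ℚ) (s i : ℕ) : ℕ := ∏ j ∈ Finset.Ioc i s, latIdx h j

/-- `n_1 ⋯ n_k`. -/
def NIdx (h : ℕ → Fin d → ℚ) (k : ℕ) : ℕ := ∏ j ∈ Finset.Icc 1 k, latIdx h j

/-- `q_i = Σ_{j=1}^i (e_{j-1} - e_j) h_j + e_i h_i` (with `q_0 = 0`). -/
def qExp (h : ℕ → Fin d → ℚ) (s i : ℕ) : Fin d → ℚ :=
  if i = 0 then 0 else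
    fun t => (∑ j ∈ Finset.Icc 1 i, ((eIdx h s (j-1) : ℚ) - (eIdx h s j : ℚ)) * h j t)
      + (eIdx h s i : ℚ) * h i t

/-- The data of an irreducible quasi-ordinary polynomial `f ∈ K[[X]][Y]` of degree
`n`, viewed in `K[[X^{1/m}]][Y]`, where (by the Abhyankar–Jung theorem) it splits,
together with the exponents `lam i j` of the contacts `d(α_i, α_j)` of its roots
and its characteristic exponents `h 1 < h 2 < … < h s` (increasing for the
coordinatewise partial order).  Quasi-ordinariness is expressed by the discriminant
`∏_{i≠j} (α_i - α_j)` being a unit times a monomial. -/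
structure QOData (K : Type*) [Field K] (d m n s : ℕ) where
  f : Polynomial (MvPowerSeries (Fin d) K)
  α : Fin n → MvPowerSeries (Fin d) K
  lam : Fin n → Fin n → (Fin d →₀ ℕ)
  h : ℕ → Fin d → ℚ
  hm : 0 < m
  hn : 0 < n
  monic : f.Monic
  degf : f.natDegree = n
  inKX : PolyInKX m f
  splits : f = ∏ i, (Polynomial.X - Polynomial.C (α i))
  irred : ∀ g h' : Polynomial (MvPowerSeries (Fin d) K), g.Monic → h'.Monic →
      PolyInKX m g → PolyInKX m h' → f = g * h' →
      g.natDegree = 0 ∨ h'.natDegree = 0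
  quasiOrdinary : ∃ (q : Fin d →₀ ℕ) (u : MvPowerSeries (Fin d) K),
      MvPowerSeries.constantCoeff u ≠ 0 ∧
      ∏ p ∈ Finset.univ.offDiag, (α p.1 - α p.2) = u * MvPowerSeries.monomial q 1
  lamSpec : ∀ i j, i ≠ j → ∃ u, MvPowerSeries.constantCoeff u ≠ 0 ∧
      α i - α j = u * MvPowerSeries.monomial (lam i j) 1
  charMem : ∀ i j, i ≠ j → ∃ l, 1 ≤ l ∧ l ≤ s ∧ expQ m (lam i j) = h l
  charSurj : ∀ l, 1 ≤ l → l ≤ s → ∃ i j, i ≠ j ∧ expQ m (lam i j) = h l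
  charMono : ∀ i j, 1 ≤ i → i < j → j ≤ s → h i < h j

open Classical in
/-- The `h`-truncation of a fractional power series at scale `1/m`: omit all terms
whose exponent vector is `≥ h` in the coordinatewise order. -/
def truncS (m : ℕ) (h : Fin d → ℚ) (γ : MvPowerSeries (Fin d) K) :
    MvPowerSeries (Fin d) K :=
  fun a => if ∀ t, h t ≤ (a t : ℚ) / m then 0 else MvPowerSeries.coeff a γ

/-- `⟨c, v⟩` for rational vectors. -/
def cdot (c v : Fin d → ℚ) : ℚ := ∑ i, c i * v i

open Classical in
/-- The continuous piecewise-linear function `φ_c` determined by the data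
`h̄_0 = 0 < h̄_1 < … < h̄_s`, values `q̄_r` at `h̄_r` (`q̄_0 = 0`), linear on each
interval `(h̄_r, h̄_{r+1})` with slope `e_r`, and slope `e_s = 1` beyond `h̄_s`. -/
def phiC (hbar qbar : ℕ → ℚ) (e : ℕ → ℕ) (s : ℕ) (t : ℚ) : ℚ :=
  if (∃ r, r ≤ s ∧ hbar r < t) then
    let r := Nat.findGreatest (fun r => hbar r < t) s
    qbar r + (e r : ℚ) * (t - hbar r)
  else 0

/-- The series `Σ ε^a c_a X^{a/m}` obtained from `γ = Σ c_a X^{a/m}` by the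
substitution `X_i^{1/m} ↦ ε_i X_i^{1/m}`. -/
def twist (ε : Fin d → K) (γ : MvPowerSeries (Fin d) K) : MvPowerSeries (Fin d) K :=
  fun a => (∏ i, ε i ^ (a i)) * MvPowerSeries.coeff a γ

/-- Weighted order `ord_ω` of a fractional power series at scale `1/m`
(`⊤` for the zero series). -/
def ordW (m : ℕ) (ω : Fin d → ℝ) (γ : MvPowerSeries (Fin d) K) : ℝ≥0∞ :=
  sInf {x : ℝ≥0∞ | ∃ a : Fin d →₀ ℕ, MvPowerSeries.coeff a γ ≠ 0 ∧
    x = ENNReal.ofReal (∑ t, ω t * ((a t : ℝ) / m))}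

/-- Sylvester matrix of two polynomials. -/
def sylvester {R : Type*} [CommRing R] (f g : Polynomial R) :
    Matrix (Fin (f.natDegree + g.natDegree)) (Fin (f.natDegree + g.natDegree)) R :=
  fun i j =>
    if (i : ℕ) < g.natDegree then
      (if (i : ℕ) ≤ (j : ℕ) ∧ (j : ℕ) ≤ (i : ℕ) + f.natDegree
        then f.coeff (f.natDegree - ((j : ℕ) - (i : ℕ))) else 0)
    else
      (if (i : ℕ) - g.natDegree ≤ (j : ℕ) ∧ (j : ℕ) ≤ (i : ℕ) - g.natDegree + g.natDegree
        then g.coeff (g.natDegree - ((j : ℕ) - ((i : ℕ) - g.natDegree))) else 0)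

/-- Resultant of two polynomials, as the determinant of the Sylvester matrix. -/
def resultant {R : Type*} [CommRing R] (f g : Polynomial R) : R :=
  (sylvester f g).det

/-- `p` is quasi-ordinary: its discriminant (the resultant of `p` and `p'`) is a unit
times a monomial. -/
def IsQuasiOrdinaryPoly (p : Polynomial (MvPowerSeries (Fin d) K)) : Prop :=
  ∃ (q : Fin d →₀ ℕ) (u : MvPowerSeries (Fin d) K),
    MvPowerSeries.constantCoeff u ≠ 0 ∧
      resultant p (Polynomial.derivative p) = u * MvPowerSeries.monomial q 1

/-! One-variable world: `K[[T^{1/M}]]` is modelled by `PowerSeries K`,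
the coefficient of `T^a` being interpreted as that of `T^{a/M}`. -/

open Classical in
/-- Order of a (scale `1/M`) one-variable fractional power series, as an element of
`WithTop ℚ` (the zero series having order `⊤`). -/
def ordQ (M : ℕ) (γ : PowerSeries K) : WithTop ℚ :=
  if γ = 0 then ⊤ else (((sInf {n : ℕ | PowerSeries.coeff n γ ≠ 0} : ℕ) : ℚ) / M : ℚ)

/-- Newton polygon of a polynomial over one-variable fractional power series at
scale `1/m`. -/
def psNP (m : ℕ) (g : Polynomial (PowerSeries K)) : Set (ℝ × ℝ) :=
  convexHull ℝ {p | ∃ (a b : ℕ), PowerSeries.coeff a (g.coeff b) ≠ 0 ∧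
    ((a : ℝ) / m) ≤ p.1 ∧ (b : ℝ) ≤ p.2}

/-- The substitution `T ↦ T^k` on one-variable power series (the canonical embedding
`K[[T^{1/m}]] ⊆ K[[T^{1/(km)}]]`). -/
def embPow (k : ℕ) (γ : PowerSeries K) : PowerSeries K :=
  PowerSeries.mk fun a => if k ∣ a then PowerSeries.coeff (a / k) γ else 0

/-- `embPow` applied to every coefficient of a polynomial. -/
def polyEmb (k : ℕ) (g : Polynomial (PowerSeries K)) : Polynomial (PowerSeries K) :=
  ∑ i ∈ g.support, Polynomial.C (embPow k (g.coeff i)) * Polynomial.X ^ i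

/-- The canonical identification of `K[[X]][Y]` with a subring of `K[[X,Y]]`:
variable `0` is `X` and variable `1` is `Y`. -/
def toMv (p : Polynomial (PowerSeries K)) : MvPowerSeries (Fin 2) K :=
  fun a => PowerSeries.coeff (a 0) (p.coeff (a 1))

/-- Intersection multiplicity `i₀(f,g) = dim_K K[[X,Y]]/(f,g)`. -/
def imult (f g : MvPowerSeries (Fin 2) K) : ℕ :=
  Module.finrank K (MvPowerSeries (Fin 2) K ⧸ Ideal.span {f, g})

end QOPaper

namespace QOPaper

section Aux

variable {K : Type*} [Field K]

/-- The generating set of the Newton polygon `psNP`. -/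
private def Smark (m : ℕ) (g : Polynomial (PowerSeries K)) : Set (ℝ × ℝ) :=
  {p | ∃ (a b : ℕ), PowerSeries.coeff a (g.coeff b) ≠ 0 ∧
    ((a : ℝ) / m) ≤ p.1 ∧ (b : ℝ) ≤ p.2}

private lemma psNP_eq_smark (m : ℕ) (g : Polynomial (PowerSeries K)) :
    psNP m g = convexHull ℝ (Smark m g) := rfl

/-- The order of a power series, as a natural number. -/
private def po (γ : PowerSeries K) : ℕ := sInf {a | PowerSeries.coeff a γ ≠ 0}

private lemma po_coeff_ne {γ : PowerSeries K} (h : γ ≠ 0) :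
    PowerSeries.coeff (po γ) γ ≠ 0 := by
  have hne : {a | PowerSeries.coeff a γ ≠ 0}.Nonempty := by
    by_contra hcon
    rw [Set.not_nonempty_iff_eq_empty] at hcon
    refine h (PowerSeries.ext fun n => ?_)
    rw [map_zero]
    by_contra hn
    exact Set.eq_empty_iff_forall_notMem.mp hcon n hn
  exact Nat.sInf_mem hne

private lemma po_le {γ : PowerSeries K} {a : ℕ} (h : PowerSeries.coeff a γ ≠ 0) :
    po γ ≤ a := Nat.sInf_le h

private lemma coeff_ne_zero_poly {g : Polynomial (PowerSeries K)} {a b : ℕ}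
    (h : PowerSeries.coeff a (g.coeff b) ≠ 0) : b ∈ g.support :=
  Polynomial.mem_support_iff.mpr (fun h0 => h (by rw [h0, map_zero]))

/-- Key combinatorial lemma: for any nonnegative weights, the product `f * g` has a
monomial achieving the sum of the minimal weighted values of `f` and `g`. -/
private lemma key_min (f g : Polynomial (PowerSeries K)) (hf : f ≠ 0) (hg : g ≠ 0)
    (c1 c2 : ℝ) (hc1 : 0 ≤ c1) (hc2 : 0 ≤ c2) :
    ∃ A B : ℕ, PowerSeries.coeff A ((f * g).coeff B) ≠ 0 ∧
      ∀ a1 b1 a2 b2 : ℕ, PowerSeries.coeff a1 (f.coeff b1) ≠ 0 →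
        PowerSeries.coeff a2 (g.coeff b2) ≠ 0 →
        c1 * A + c2 * B ≤ c1 * ((a1 : ℝ) + a2) + c2 * ((b1 : ℝ) + b2) := by
  classical
  set φf : ℕ → ℝ := fun b => c1 * po (f.coeff b) + c2 * b with hφf
  set φg : ℕ → ℝ := fun b => c1 * po (g.coeff b) + c2 * b with hφg
  obtain ⟨bf0, hbf0, hbfmin⟩ :=
    f.support.exists_min_image φf (Polynomial.support_nonempty.mpr hf)
  obtain ⟨bg0, hbg0, hbgmin⟩ :=
    g.support.exists_min_image φg (Polynomial.support_nonempty.mpr hg)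
  set Sf := f.support.filter (fun b => φf b = φf bf0) with hSf
  set Sg := g.support.filter (fun b => φg b = φg bg0) with hSg
  have hSfne : Sf.Nonempty := ⟨bf0, Finset.mem_filter.mpr ⟨hbf0, rfl⟩⟩
  have hSgne : Sg.Nonempty := ⟨bg0, Finset.mem_filter.mpr ⟨hbg0, rfl⟩⟩
  set b1 := Sf.max' hSfne with hb1def
  set b2 := Sg.max' hSgne with hb2def
  have hb1 := Finset.mem_filter.mp (Sf.max'_mem hSfne)
  have hb2 := Finset.mem_filter.mp (Sg.max'_mem hSgne)
  set a1 := po (f.coeff b1) with ha1def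
  set a2 := po (g.coeff b2) with ha2def
  have hfb1 : f.coeff b1 ≠ 0 := Polynomial.mem_support_iff.mp hb1.1
  have hgb2 : g.coeff b2 ≠ 0 := Polynomial.mem_support_iff.mp hb2.1
  -- lower bounds
  have hlbf : ∀ a b : ℕ, PowerSeries.coeff a (f.coeff b) ≠ 0 →
      φf bf0 ≤ c1 * a + c2 * b := by
    intro a b h
    have hb : b ∈ f.support := coeff_ne_zero_poly h
    have h2 : ((po (f.coeff b) : ℝ)) ≤ a := Nat.cast_le.mpr (po_le h)
    have h3 := mul_le_mul_of_nonneg_left h2 hc1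
    have h4 := hbfmin b hb
    simp only [hφf] at h4 ⊢
    linarith
  have hlbg : ∀ a b : ℕ, PowerSeries.coeff a (g.coeff b) ≠ 0 →
      φg bg0 ≤ c1 * a + c2 * b := by
    intro a b h
    have hb : b ∈ g.support := coeff_ne_zero_poly h
    have h2 : ((po (g.coeff b) : ℝ)) ≤ a := Nat.cast_le.mpr (po_le h)
    have h3 := mul_le_mul_of_nonneg_left h2 hc1
    have h4 := hbgmin b hb
    simp only [hφg] at h4 ⊢
    linarith
  have e1 : c1 * (a1 : ℝ) + c2 * b1 = φf bf0 := hb1.2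
  have e2 : c1 * (a2 : ℝ) + c2 * b2 = φg bg0 := hb2.2
  -- squeeze
  have hsq : ∀ b b' a a' : ℕ, b + b' = b1 + b2 → a + a' = a1 + a2 →
      PowerSeries.coeff a (f.coeff b) ≠ 0 → PowerSeries.coeff a' (g.coeff b') ≠ 0 →
      b = b1 ∧ b' = b2 ∧ a = a1 ∧ a' = a2 := by
    intro b b' a a' hbB haA hfa hga
    have h1 : φf bf0 ≤ c1 * a + c2 * b := hlbf _ _ hfa
    have h2 : φg bg0 ≤ c1 * a' + c2 * b' := hlbg _ _ hga
    have hcA : (a : ℝ) + a' = (a1 : ℝ) + a2 := by exact_mod_cast haA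
    have hcB : (b : ℝ) + b' = (b1 : ℝ) + b2 := by exact_mod_cast hbB
    have m1 : c1 * (a : ℝ) + c1 * a' = c1 * a1 + c1 * a2 := by
      rw [← mul_add, ← mul_add, hcA]
    have m2 : c2 * (b : ℝ) + c2 * b' = c2 * b1 + c2 * b2 := by
      rw [← mul_add, ← mul_add, hcB]
    have heqf : c1 * a + c2 * b = φf bf0 := by linarith
    have heqg : c1 * a' + c2 * b' = φg bg0 := by linarith
    -- b achieves the minimum for f
    have hpof : ((po (f.coeff b) : ℝ)) ≤ a := Nat.cast_le.mpr (po_le hfa)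
    have hpog : ((po (g.coeff b') : ℝ)) ≤ a' := Nat.cast_le.mpr (po_le hga)
    have hbmem : b ∈ Sf := by
      refine Finset.mem_filter.mpr ⟨coeff_ne_zero_poly hfa, ?_⟩
      have hmin := hbfmin b (coeff_ne_zero_poly hfa)
      have hup : φf b ≤ c1 * a + c2 * b := by
        simp only [hφf]
        nlinarith [mul_le_mul_of_nonneg_left hpof hc1]
      linarith
    have hbmem' : b' ∈ Sg := by
      refine Finset.mem_filter.mpr ⟨coeff_ne_zero_poly hga, ?_⟩
      have hmin := hbgmin b' (coeff_ne_zero_poly hga)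
      have hup : φg b' ≤ c1 * a' + c2 * b' := by
        simp only [hφg]
        nlinarith [mul_le_mul_of_nonneg_left hpog hc1]
      linarith
    have hble : b ≤ b1 := Sf.le_max' b hbmem
    have hble' : b' ≤ b2 := Sg.le_max' b' hbmem'
    have hbeq : b = b1 ∧ b' = b2 := by omega
    obtain ⟨rfl, rfl⟩ := hbeq
    have ha : a1 ≤ a := po_le hfa
    have ha' : a2 ≤ a' := po_le hga
    refine ⟨rfl, rfl, by omega, by omega⟩
  refine ⟨a1 + a2, b1 + b2, ?_, ?_⟩
  · have hexp : PowerSeries.coeff (a1 + a2) ((f * g).coeff (b1 + b2))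
        = ∑ x ∈ Finset.HasAntidiagonal.antidiagonal (b1 + b2), ∑ y ∈ Finset.HasAntidiagonal.antidiagonal (a1 + a2),
            PowerSeries.coeff y.1 (f.coeff x.1) * PowerSeries.coeff y.2 (g.coeff x.2) := by
      rw [Polynomial.coeff_mul, map_sum]
      exact Finset.sum_congr rfl fun x _ => PowerSeries.coeff_mul _ _ _
    rw [hexp]
    rw [Finset.sum_eq_single_of_mem (b1, b2) (Finset.HasAntidiagonal.mem_antidiagonal.mpr rfl)
      (fun x hx hne => ?_)]
    · rw [Finset.sum_eq_single_of_mem (a1, a2) (Finset.HasAntidiagonal.mem_antidiagonal.mpr rfl)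
        (fun y hy hne => ?_)]
      · exact mul_ne_zero (po_coeff_ne hfb1) (po_coeff_ne hgb2)
      · by_contra hterm
        have h1 : PowerSeries.coeff y.1 (f.coeff b1) ≠ 0 := fun h => hterm (by rw [h, zero_mul])
        have h2 : PowerSeries.coeff y.2 (g.coeff b2) ≠ 0 := fun h => hterm (by rw [h, mul_zero])
        obtain ⟨-, -, hy1, hy2⟩ := hsq b1 b2 y.1 y.2 rfl (Finset.HasAntidiagonal.mem_antidiagonal.mp hy) h1 h2
        exact hne (Prod.ext hy1 hy2)
    · refine Finset.sum_eq_zero fun y hy => ?_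
      by_contra hterm
      have h1 : PowerSeries.coeff y.1 (f.coeff x.1) ≠ 0 := fun h => hterm (by rw [h, zero_mul])
      have h2 : PowerSeries.coeff y.2 (g.coeff x.2) ≠ 0 := fun h => hterm (by rw [h, mul_zero])
      obtain ⟨hx1, hx2, -, -⟩ := hsq x.1 x.2 y.1 y.2 (Finset.HasAntidiagonal.mem_antidiagonal.mp hx)
        (Finset.HasAntidiagonal.mem_antidiagonal.mp hy) h1 h2
      exact hne (Prod.ext hx1 hx2)
  · intro a1' b1' a2' b2' h1 h2
    have l1 := hlbf _ _ h1
    have l2 := hlbg _ _ h2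
    have hAc : ((a1 + a2 : ℕ) : ℝ) = (a1 : ℝ) + a2 := by push_cast; ring
    have hBc : ((b1 + b2 : ℕ) : ℝ) = (b1 : ℝ) + b2 := by push_cast; ring
    rw [hAc, hBc]
    linarith

private lemma smark_eq_add (m : ℕ) (g : Polynomial (PowerSeries K)) :
    Smark m g = (fun b : ℕ => (((po (g.coeff b) : ℝ)) / m, (b : ℝ))) '' (g.support : Set ℕ)
      + Set.Ici (0 : ℝ × ℝ) := by
  ext p
  constructor
  · rintro ⟨a, b, h, h1, h2⟩
    have hb : b ∈ g.support := coeff_ne_zero_poly h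
    have hple : ((po (g.coeff b) : ℝ)) / m ≤ (a : ℝ) / m := by
      rw [div_eq_mul_inv, div_eq_mul_inv]
      exact mul_le_mul_of_nonneg_right (Nat.cast_le.mpr (po_le h))
        (inv_nonneg.mpr (Nat.cast_nonneg m))
    have hp : p = (((po (g.coeff b) : ℝ)) / m, (b : ℝ))
        + (p.1 - ((po (g.coeff b) : ℝ)) / m, p.2 - b) := by
      ext <;> simp
    rw [hp]
    refine Set.add_mem_add ⟨b, hb, rfl⟩ ?_
    rw [Set.mem_Ici, Prod.le_def]
    constructor
    · simpa using by linarith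
    · simpa using by linarith
  · rintro ⟨x, ⟨b, hb, rfl⟩, q, hq, rfl⟩
    rw [Set.mem_Ici, Prod.le_def] at hq
    obtain ⟨hq1, hq2⟩ := hq
    refine ⟨po (g.coeff b), b, po_coeff_ne (Polynomial.mem_support_iff.mp hb), ?_, ?_⟩
    · simp only [Prod.fst_add]
      simp only [Prod.fst_zero] at hq1
      linarith
    · simp only [Prod.snd_add]
      simp only [Prod.snd_zero] at hq2
      linarith

private lemma convexHull_smark (m : ℕ) (g : Polynomial (PowerSeries K)) :
    convexHull ℝ (Smark m g) =
      convexHull ℝ ((fun b : ℕ => (((po (g.coeff b) : ℝ)) / m, (b : ℝ))) '' (g.support : Set ℕ))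
        + Set.Ici (0 : ℝ × ℝ) := by
  have hIci : Set.Ici ((0 : ℝ), (0 : ℝ)) = Set.Ici (0 : ℝ) ×ˢ Set.Ici (0 : ℝ) :=
    (Set.Ici_prod_Ici (0 : ℝ) (0 : ℝ)).symm
  have hconv : Convex ℝ (Set.Ici (0 : ℝ × ℝ)) := by
    rw [show ((0 : ℝ × ℝ)) = ((0 : ℝ), (0 : ℝ)) from rfl, hIci]
    exact (convex_Ici 0).prod (convex_Ici 0)
  rw [smark_eq_add, convexHull_add, hconv.convexHull_eq]

private lemma smark_closed (m : ℕ) (g : Polynomial (PowerSeries K)) :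
    IsClosed (convexHull ℝ (Smark m g)) := by
  rw [convexHull_smark]
  have hIci : IsClosed (Set.Ici (0 : ℝ × ℝ)) := by
    rw [show ((0 : ℝ × ℝ)) = ((0 : ℝ), (0 : ℝ)) from rfl, ← Set.Ici_prod_Ici]
    exact isClosed_Ici.prod isClosed_Ici
  exact hIci.add_left_of_isCompact
    ((g.support.finite_toSet.image _).isCompact_convexHull (𝕜 := ℝ))

private lemma convexHull_smark_absorb (m : ℕ) (g : Polynomial (PowerSeries K))
    {x q : ℝ × ℝ} (hx : x ∈ convexHull ℝ (Smark m g)) (hq : q ∈ Set.Ici (0 : ℝ × ℝ)) :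
    x + q ∈ convexHull ℝ (Smark m g) := by
  rw [convexHull_smark] at hx ⊢
  obtain ⟨y, hy, z, hz, rfl⟩ := hx
  rw [add_assoc]
  exact Set.add_mem_add hy (by
    rw [Set.mem_Ici] at hz hq ⊢
    calc (0 : ℝ × ℝ) ≤ z := hz
      _ ≤ z + q := le_add_of_nonneg_right hq)

end Aux

/-- The Newton polygon of a product of monic polynomials over the
ring of Puiseux series `K[[T^{1/m}]]` is the Minkowski sum of the Newton polygons of
the factors. -/
theorem newtonPolygon_mul {K : Type*} [Field K] [IsAlgClosed K] [CharZero K]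
    (m : ℕ) (hm : 0 < m) (f g : Polynomial (PowerSeries K))
    (hf : f.Monic) (hg : g.Monic) :
    psNP m (f * g) = psNP m f + psNP m g := by
  classical
  have hf0 : f ≠ 0 := hf.ne_zero
  have hg0 : g ≠ 0 := hg.ne_zero
  rw [psNP_eq_smark, psNP_eq_smark, psNP_eq_smark]
  apply Set.Subset.antisymm
  · -- easy inclusion: `NP(fg) ⊆ NP(f) + NP(g)`
    rw [← convexHull_add]
    apply convexHull_mono
    rintro p ⟨a, b, hab, h1, h2⟩
    have hex : ∃ x ∈ Finset.HasAntidiagonal.antidiagonal b, ∃ y ∈ Finset.HasAntidiagonal.antidiagonal a,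
        PowerSeries.coeff y.1 (f.coeff x.1) * PowerSeries.coeff y.2 (g.coeff x.2) ≠ 0 := by
      by_contra hcon
      push_neg at hcon
      apply hab
      rw [Polynomial.coeff_mul, map_sum]
      refine Finset.sum_eq_zero fun x hx => ?_
      rw [PowerSeries.coeff_mul]
      exact Finset.sum_eq_zero fun y hy => hcon x hx y hy
    obtain ⟨x, hx, y, hy, hne⟩ := hex
    have hf1 : PowerSeries.coeff y.1 (f.coeff x.1) ≠ 0 := left_ne_zero_of_mul hne
    have hg1 : PowerSeries.coeff y.2 (g.coeff x.2) ≠ 0 := right_ne_zero_of_mul hne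
    have hxs : x.1 + x.2 = b := Finset.HasAntidiagonal.mem_antidiagonal.mp hx
    have hys : y.1 + y.2 = a := Finset.HasAntidiagonal.mem_antidiagonal.mp hy
    have hca : (y.1 : ℝ) + y.2 = a := by exact_mod_cast hys
    have hcb : (x.1 : ℝ) + x.2 = b := by exact_mod_cast hxs
    have hdiv : (y.1 : ℝ) / m + (y.2 : ℝ) / m = (a : ℝ) / m := by
      rw [← add_div, hca]
    have hp : p = ((y.1 : ℝ) / m, (x.1 : ℝ)) + (p.1 - (y.1 : ℝ) / m, p.2 - (x.1 : ℝ)) := by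
      ext <;> simp
    rw [hp]
    refine Set.add_mem_add ⟨y.1, x.1, hf1, le_refl _, le_refl _⟩
      ⟨y.2, x.2, hg1, ?_, ?_⟩
    · simp only
      linarith
    · simp only
      linarith
  · -- hard inclusion: `NP(f) + NP(g) ⊆ NP(fg)`
    rw [← convexHull_add]
    refine convexHull_min ?_ (convex_convexHull ℝ _)
    rintro r hr
    rw [Set.mem_add] at hr
    obtain ⟨p, ⟨a1, b1, hf1, hp1, hp2⟩, q, ⟨a2, b2, hg1, hq1, hq2⟩, rfl⟩ := hr
    set x0 : ℝ × ℝ := (((a1 : ℝ) + a2) / m, (b1 : ℝ) + b2) with hx0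
    have hx0mem : x0 ∈ convexHull ℝ (Smark m (f * g)) := by
      by_contra hcon
      obtain ⟨L, u, hLx, hsep⟩ := geometric_hahn_banach_point_closed
        (convex_convexHull ℝ _) (smark_closed m (f * g)) hcon
      set c1 := L (1, 0) with hc1d
      set c2 := L (0, 1) with hc2d
      have hL : ∀ y : ℝ × ℝ, L y = y.1 * c1 + y.2 * c2 := by
        intro y
        have hy : y = y.1 • ((1 : ℝ), (0 : ℝ)) + y.2 • ((0 : ℝ), (1 : ℝ)) := by
          ext <;> simp
        conv_lhs => rw [hy, map_add, map_smul, map_smul]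
        simp only [smul_eq_mul, hc1d, hc2d]
      set D := (f * g).natDegree with hD
      have hmem : ∀ t t' : ℝ, 0 ≤ t → 0 ≤ t' →
          ((t, (D : ℝ) + t') : ℝ × ℝ) ∈ convexHull ℝ (Smark m (f * g)) := by
        intro t t' ht ht'
        apply subset_convexHull
        refine ⟨0, D, ?_, by simpa using ht, by simp only; linarith⟩
        rw [(hf.mul hg).coeff_natDegree]
        simp [PowerSeries.coeff_one]
      have hDc : ∀ t t' : ℝ, 0 ≤ t → 0 ≤ t' → u < t * c1 + ((D : ℝ) + t') * c2 := by
        intro t t' ht ht'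
        have h := hsep _ (hmem t t' ht ht')
        rwa [hL] at h
      have hc1 : 0 ≤ c1 := by
        by_contra hneg
        push_neg at hneg
        have h0 := hDc 0 0 le_rfl le_rfl
        simp only [zero_mul, add_zero, zero_add] at h0
        set t := (u - (D : ℝ) * c2 - 1) / c1 with htd
        have ht : 0 ≤ t := by
          rw [htd, div_nonneg_iff]
          right
          constructor <;> linarith
        have h1 := hDc t 0 ht le_rfl
        have h2 : t * c1 = u - (D : ℝ) * c2 - 1 := div_mul_cancel₀ _ (ne_of_lt hneg)
        rw [add_zero] at h1
        linarith
      have hc2 : 0 ≤ c2 := by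
        by_contra hneg
        push_neg at hneg
        have h0 := hDc 0 0 le_rfl le_rfl
        simp only [zero_mul, add_zero, zero_add] at h0
        set t := (u - 1) / c2 - (D : ℝ) with htd
        have ht : 0 ≤ t := by
          rw [htd, sub_nonneg]
          rw [le_div_iff_of_neg hneg]
          nlinarith
        have h1 := hDc 0 t le_rfl ht
        have h2 : ((D : ℝ) + t) * c2 = u - 1 := by
          rw [htd]
          have he : (D : ℝ) + ((u - 1) / c2 - D) = (u - 1) / c2 := by ring
          rw [he, div_mul_cancel₀ _ (ne_of_lt hneg)]
        rw [zero_mul, zero_add] at h1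
        linarith
      obtain ⟨A, B, hAB, hmin⟩ := key_min f g hf0 hg0 (c1 / m) c2
        (div_nonneg hc1 (Nat.cast_nonneg m)) hc2
      have hABmem : (((A : ℝ) / m, (B : ℝ)) : ℝ × ℝ) ∈ convexHull ℝ (Smark m (f * g)) :=
        subset_convexHull _ _ ⟨A, B, hAB, le_rfl, le_rfl⟩
      have h1 := hsep _ hABmem
      rw [hL] at h1
      have h2 := hmin a1 b1 a2 b2 hf1 hg1
      have h3 : L x0 = ((a1 : ℝ) + a2) / m * c1 + ((b1 : ℝ) + b2) * c2 := by rw [hL]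
      have h4 : ((A : ℝ) / m) * c1 + (B : ℝ) * c2 ≤ L x0 := by
        rw [h3]
        have e1 : ((A : ℝ) / m) * c1 = c1 / m * A := by ring
        have e2 : ((a1 : ℝ) + a2) / m * c1 = c1 / m * ((a1 : ℝ) + a2) := by ring
        rw [e1, e2]
        linarith
      simp only at h1
      linarith
    have heq : p + q = x0 + (p.1 + q.1 - x0.1, p.2 + q.2 - x0.2) := by
      ext <;> simp
    rw [heq]
    apply convexHull_smark_absorb m (f * g) hx0mem
    rw [Set.mem_Ici, Prod.le_def]
    have hdiv : (a1 : ℝ) / m + (a2 : ℝ) / m = ((a1 : ℝ) + a2) / m := by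
      rw [← add_div]
    constructor
    · simp only [hx0, Prod.fst_zero]
      linarith
    · simp only [hx0, Prod.snd_zero]
      linarith

end QOPaper
end
end

section
/- Let γ₁, γ₂ ∈ K[[X^{1/m}]] be nonzero fractional power series in d variables. If ord γ₁^{[c]} = ord γ₂^{[c]} for all c in some open dense subset of ℚ_+^d, then Δ(γ₁) = Δ(γ₂). -/
open scoped Pointwise ENNReal

noncomputable section

namespace QOPaper

section Aux

variable {K : Type*} [Field K] {d : ℕ}

/-- The weight `⟨c, a⟩` of a multi-exponent. -/
def wgt (c : Fin d → ℚ) (a : Fin d →₀ ℕ) : ℚ := ∑ i, c i * (a i : ℚ)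

/-- The support of a multivariate power series. -/
def suppS (γ : MvPowerSeries (Fin d) K) : Set (Fin d →₀ ℕ) :=
  {a | MvPowerSeries.coeff a γ ≠ 0}

/-- Minimal elements of the support. -/
def minS (γ : MvPowerSeries (Fin d) K) : Set (Fin d →₀ ℕ) :=
  {g ∈ suppS γ | ∀ b ∈ suppS γ, b ≤ g → b = g}

lemma minS_subset (γ : MvPowerSeries (Fin d) K) : minS γ ⊆ suppS γ := fun _ h => h.1

lemma minS_finite (γ : MvPowerSeries (Fin d) K) : (minS γ).Finite := by
  have hanti : IsAntichain (· ≤ ·) (minS γ) := by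
    intro a ha b hb hab hle
    exact hab (hb.2 a ha.1 hle)
  exact hanti.finite_of_partiallyWellOrderedOn (Set.isPWO_of_wellQuasiOrderedLE (minS γ))

lemma exists_minS_le {γ : MvPowerSeries (Fin d) K} {a : Fin d →₀ ℕ} (ha : a ∈ suppS γ) :
    ∃ g ∈ minS γ, g ≤ a := by
  obtain ⟨g, hg, hmin⟩ :=
    (Finsupp.wellFoundedLT').wf.has_min {b ∈ suppS γ | b ≤ a} ⟨a, ha, le_refl a⟩
  exact ⟨g, ⟨hg.1, fun b hb hba => by
    by_contra hne
    exact hmin b ⟨hb, hba.trans hg.2⟩ (lt_of_le_of_ne hba hne)⟩, hg.2⟩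

lemma suppS_nonempty {γ : MvPowerSeries (Fin d) K} (h : γ ≠ 0) : (suppS γ).Nonempty := by
  by_contra hc
  apply h
  ext a
  rw [Set.not_nonempty_iff_eq_empty] at hc
  have := Set.eq_empty_iff_forall_notMem.mp hc a
  simpa [suppS] using this

lemma wgt_mono {c : Fin d → ℚ} (hc : ∀ i, 0 ≤ c i) {a b : Fin d →₀ ℕ} (hab : a ≤ b) :
    wgt c a ≤ wgt c b := by
  apply Finset.sum_le_sum
  intro i _
  have := Finsupp.le_def.mp hab i
  exact mul_le_mul_of_nonneg_left (by exact_mod_cast this) (hc i)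

lemma wgt_strict {c : Fin d → ℚ} (hc : ∀ i, 0 < c i) {a b : Fin d →₀ ℕ} (hab : a ≤ b)
    (heq : wgt c a = wgt c b) : a = b := by
  have hz : ∑ i, c i * ((b i : ℚ) - (a i : ℚ)) = 0 := by
    have : wgt c b - wgt c a = 0 := by rw [heq]; ring
    rw [← this, wgt, wgt, ← Finset.sum_sub_distrib]
    congr 1; ext i; ring
  have hnn : ∀ i ∈ Finset.univ, 0 ≤ c i * ((b i : ℚ) - (a i : ℚ)) := by
    intro i _
    have := Finsupp.le_def.mp hab i
    have : (a i : ℚ) ≤ (b i : ℚ) := by exact_mod_cast this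
    nlinarith [hc i]
  have := (Finset.sum_eq_zero_iff_of_nonneg hnn).mp hz
  ext i
  have h0 := this i (Finset.mem_univ i)
  rcases mul_eq_zero.mp h0 with h | h
  · exact absurd h (ne_of_gt (hc i))
  · have : (a i : ℚ) = (b i : ℚ) := by linarith
    exact_mod_cast this

lemma wgt_sub_eq (c : Fin d → ℚ) (g g' : Fin d →₀ ℕ) :
    wgt c g - wgt c g' = ∑ i, c i * ((g i : ℚ) - (g' i : ℚ)) := by
  rw [wgt, wgt, ← Finset.sum_sub_distrib]
  exact Finset.sum_congr rfl fun i _ => by ring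

lemma exists_good_min (γ : MvPowerSeries (Fin d) K) (hγ : γ ≠ 0) (c : Fin d → ℚ)
    (hc : ∀ i, 0 < c i)
    (hdist : ∀ g ∈ minS γ, ∀ g' ∈ minS γ, g ≠ g' → wgt c g ≠ wgt c g') :
    ∃ g₀ ∈ minS γ, (∀ a ∈ suppS γ, wgt c g₀ ≤ wgt c a) ∧
      (∀ a ∈ suppS γ, wgt c a = wgt c g₀ → a = g₀) := by
  obtain ⟨a₀, ha₀⟩ := suppS_nonempty hγ
  obtain ⟨gm, hgm, -⟩ := exists_minS_le ha₀
  have hGne : (minS_finite γ).toFinset.Nonempty := ⟨gm, (minS_finite γ).mem_toFinset.mpr hgm⟩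
  obtain ⟨g₀, hg₀G, hg₀min⟩ := Finset.exists_min_image (minS_finite γ).toFinset (wgt c) hGne
  have hg₀ : g₀ ∈ minS γ := (minS_finite γ).mem_toFinset.mp hg₀G
  have hminAll : ∀ a ∈ suppS γ, wgt c g₀ ≤ wgt c a := by
    intro a ha
    obtain ⟨g, hg, hga⟩ := exists_minS_le ha
    exact le_trans (hg₀min g ((minS_finite γ).mem_toFinset.mpr hg))
      (wgt_mono (fun i => (hc i).le) hga)
  refine ⟨g₀, hg₀, hminAll, ?_⟩
  intro a ha heq
  obtain ⟨g, hg, hga⟩ := exists_minS_le ha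
  have h1 : wgt c g₀ ≤ wgt c g := hg₀min g ((minS_finite γ).mem_toFinset.mpr hg)
  have h2 : wgt c g ≤ wgt c a := wgt_mono (fun i => (hc i).le) hga
  have hgg0 : g = g₀ := by
    by_contra hne
    exact hdist g hg g₀ hg₀ hne (le_antisymm (by linarith) h1)
  subst hgg0
  exact (wgt_strict hc hga heq.symm).symm

lemma coeff_substHahn (m : ℕ) (c : Fin d → ℚ) (hc : ∀ i, 0 ≤ c i)
    (γ : MvPowerSeries (Fin d) K) (q : ℚ) :
    (substHahn m c hc γ).coeff q
      = ∑ᶠ a ∈ {a : Fin d →₀ ℕ | wgt c a / m = q}, MvPowerSeries.coeff a γ := rfl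

lemma orderTop_substHahn (m : ℕ) (hm : 0 < m) (γ : MvPowerSeries (Fin d) K)
    (c : Fin d → ℚ) (hc : ∀ i, 0 < c i) (g₀ : Fin d →₀ ℕ) (hg₀ : g₀ ∈ suppS γ)
    (hmin : ∀ a ∈ suppS γ, wgt c g₀ ≤ wgt c a)
    (huniq : ∀ a ∈ suppS γ, wgt c a = wgt c g₀ → a = g₀) :
    (substHahn m c (fun i => (hc i).le) γ).orderTop = ((wgt c g₀ / m : ℚ) : WithTop ℚ) := by
  have hm' : (0:ℚ) < (m:ℚ) := by exact_mod_cast hm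
  set q₀ : ℚ := wgt c g₀ / m with hq₀
  have hcoeff0 : ∀ q : ℚ, q < q₀ → (substHahn m c (fun i => (hc i).le) γ).coeff q = 0 := by
    intro q hq
    rw [coeff_substHahn]
    have hint : {a : Fin d →₀ ℕ | wgt c a / m = q} ∩
        (Function.support fun a => MvPowerSeries.coeff a γ)
        = (↑(∅ : Finset (Fin d →₀ ℕ)) : Set (Fin d →₀ ℕ)) ∩
          (Function.support fun a => MvPowerSeries.coeff a γ) := by
      ext a
      simp only [Set.mem_inter_iff, Set.mem_setOf_eq, Finset.coe_empty,
        Set.empty_inter, Set.mem_empty_iff_false, iff_false, not_and,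
        Function.mem_support]
      intro ha hA
      have h1 : q₀ ≤ wgt c a / m := by
        rw [hq₀, div_le_div_iff_of_pos_right hm']
        exact hmin a hA
      rw [ha] at h1
      exact absurd hq (not_lt.mpr h1)
    rw [finsum_mem_eq_sum_of_inter_support_eq _ hint, Finset.sum_empty]
  have hcoeffq0 : (substHahn m c (fun i => (hc i).le) γ).coeff q₀
      = MvPowerSeries.coeff g₀ γ := by
    rw [coeff_substHahn]
    have hint : {a : Fin d →₀ ℕ | wgt c a / m = q₀} ∩
        (Function.support fun a => MvPowerSeries.coeff a γ)
        = (↑({g₀} : Finset (Fin d →₀ ℕ)) : Set (Fin d →₀ ℕ)) ∩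
          (Function.support fun a => MvPowerSeries.coeff a γ) := by
      ext a
      simp only [Set.mem_inter_iff, Set.mem_setOf_eq, Finset.coe_singleton,
        Set.mem_singleton_iff, Function.mem_support]
      constructor
      · rintro ⟨ha, hA⟩
        have : wgt c a = wgt c g₀ := by
          have := ha
          rw [hq₀, div_eq_div_iff (ne_of_gt hm') (ne_of_gt hm')] at this
          exact mul_right_cancel₀ (ne_of_gt hm') this
        exact ⟨huniq a hA this, hA⟩
      · rintro ⟨rfl, hA⟩
        exact ⟨rfl, hA⟩
    rw [finsum_mem_eq_sum_of_inter_support_eq _ hint, Finset.sum_singleton]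
  apply HahnSeries.orderTop_eq_of_le
  · rw [HahnSeries.mem_support, hcoeffq0]
    exact hg₀
  · intro q' hq'
    by_contra hlt
    rw [HahnSeries.mem_support] at hq'
    exact hq' (hcoeff0 q' (not_le.mp hlt))

/-- The embedding of a multi-exponent into `ℝ^d` at scale `1/m`. -/
def emb (m : ℕ) (g : Fin d →₀ ℕ) : Fin d → ℝ := fun i => (g i : ℝ) / m

/-- The nonnegative quadrant. -/
def rQ (d : ℕ) : Set (Fin d → ℝ) := {x | ∀ i, 0 ≤ x i}

lemma rQ_convex : Convex ℝ (rQ d) := by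
  intro x hx y hy s t hs ht _
  intro i
  simp only [Pi.add_apply, Pi.smul_apply, smul_eq_mul]
  exact add_nonneg (mul_nonneg hs (hx i)) (mul_nonneg ht (hy i))

lemma rQ_closed : IsClosed (rQ d) := by
  have : rQ d = Set.pi Set.univ (fun _ : Fin d => Set.Ici (0:ℝ)) := by
    ext x; simp [rQ, Set.mem_pi, Pi.le_def]
  rw [this]
  exact isClosed_set_pi fun i _ => isClosed_Ici

lemma np_eq (m : ℕ) (hm : 0 < m) (γ : MvPowerSeries (Fin d) K) :
    NewtonPolytope m γ = convexHull ℝ (emb m '' minS γ) + rQ d := by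
  apply Set.Subset.antisymm
  · apply convexHull_min ?_ ((convex_convexHull ℝ _).add rQ_convex)
    rintro p ⟨a, ha, hap⟩
    obtain ⟨g, hg, hga⟩ := exists_minS_le (γ := γ) ha
    have h1 : emb m g ∈ convexHull ℝ (emb m '' minS γ) :=
      subset_convexHull ℝ _ ⟨g, hg, rfl⟩
    have hm' : (0:ℝ) < (m:ℝ) := by exact_mod_cast hm
    have h2 : p - emb m g ∈ rQ d := by
      intro i
      have hga' : (g i : ℝ) ≤ (a i : ℝ) := by exact_mod_cast Finsupp.le_def.mp hga i
      have hle : (g i : ℝ) / m ≤ (a i : ℝ) / m := (div_le_div_iff_of_pos_right hm').mpr hga'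
      have := hap i
      simp only [Pi.sub_apply, emb]
      linarith
    have := Set.add_mem_add h1 h2
    simpa using this
  · rintro x ⟨y, hy, q, hq, rfl⟩
    have h1 : emb m '' minS γ + {q} ⊆ {p | ∃ a : Fin d →₀ ℕ, MvPowerSeries.coeff a γ ≠ 0 ∧
        ∀ i, ((a i : ℝ) / m) ≤ p i} := by
      rintro z ⟨u, ⟨g, hg, rfl⟩, q', hq', rfl⟩
      simp only [Set.mem_singleton_iff] at hq'
      subst hq'
      exact ⟨g, hg.1, fun i => by have := hq i; simp [emb]; linarith⟩
    have h2 : y + q ∈ convexHull ℝ (emb m '' minS γ + {q}) := by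
      rw [convexHull_add, convexHull_singleton]
      exact Set.add_mem_add hy rfl
    exact (convexHull_mono h1) h2

lemma sep (m : ℕ) (hm : 0 < m) (γ : MvPowerSeries (Fin d) K) (hγ : γ ≠ 0)
    (g₁ : Fin d →₀ ℕ) (hnin : emb m g₁ ∉ NewtonPolytope m γ) :
    ∃ c : Fin d → ℚ, (∀ i, 0 < c i) ∧ ∀ g ∈ minS γ, wgt c g₁ < wgt c g := by
  rw [np_eq m hm γ] at hnin
  set C := convexHull ℝ (emb m '' minS γ) + rQ d with hC
  have hm' : (0:ℝ) < (m:ℝ) := by exact_mod_cast hm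
  have hCconv : Convex ℝ C := (convex_convexHull ℝ _).add rQ_convex
  have hfin : (emb m '' minS γ).Finite := (minS_finite γ).image _
  have hCclosed : IsClosed C :=
    rQ_closed.add_left_of_isCompact (hfin.isCompact_convexHull (𝕜 := ℝ))
  obtain ⟨f, u, hfp, hfC⟩ := geometric_hahn_banach_point_closed hCconv hCclosed hnin
  set cR : Fin d → ℝ := fun i => f (fun j => if i = j then 1 else 0) with hcR
  have f_eq : ∀ x : Fin d → ℝ, f x = ∑ i, x i * cR i := by
    intro x
    conv_lhs => rw [pi_eq_sum_univ x]
    rw [map_sum]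
    congr 1
    ext i
    rw [map_smul, smul_eq_mul]
  have hzero : (0 : Fin d → ℝ) ∈ rQ d := fun i => le_refl 0
  have hmemC : ∀ g ∈ minS γ, emb m g ∈ C := by
    intro g hg
    have := Set.add_mem_add (subset_convexHull ℝ (emb m '' minS γ) ⟨g, hg, rfl⟩) hzero
    simpa using this
  obtain ⟨a₀, ha₀⟩ := suppS_nonempty hγ
  obtain ⟨g₀, hg₀, -⟩ := exists_minS_le ha₀
  have hy₀ := hfC _ (hmemC g₀ hg₀)
  have hcRnn : ∀ i, 0 ≤ cR i := by
    intro i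
    by_contra hneg
    push_neg at hneg
    have hne : cR i ≠ 0 := ne_of_lt hneg
    set t : ℝ := (f (emb m g₀) - u + 1) / (-cR i) with ht
    have htpos : 0 < t := div_pos (by linarith) (by linarith)
    have hmem : emb m g₀ + t • (fun j => if i = j then (1:ℝ) else 0) ∈ C := by
      refine Set.add_mem_add (subset_convexHull ℝ _ ⟨g₀, hg₀, rfl⟩) ?_
      intro j
      simp only [Pi.smul_apply, smul_eq_mul]
      by_cases h : i = j
      · simp [h]; linarith
      · simp [h]
    have hlt := hfC _ hmem
    rw [map_add, map_smul, smul_eq_mul] at hlt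
    have hfe : f (fun j => if i = j then (1:ℝ) else 0) = cR i := rfl
    rw [hfe] at hlt
    have hti : t * cR i = -(f (emb m g₀) - u + 1) := by
      have hne' : (-cR i) ≠ 0 := by simpa using hne
      rw [ht, div_mul_eq_mul_div, div_eq_iff hne']
      ring
    rw [hti] at hlt
    linarith
  have hfg : ∀ g ∈ minS γ, u < f (emb m g) := fun g hg => hfC _ (hmemC g hg)
  set δ : ℝ := u - f (emb m g₁) with hδ
  have hδpos : 0 < δ := by rw [hδ]; linarith [hfp]
  set Sa : ℝ := ∑ i, (g₁ i : ℝ) / m with hSa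
  have hSann : 0 ≤ Sa := Finset.sum_nonneg fun i _ => by positivity
  obtain ⟨ε, hε0, hεlt⟩ := exists_rat_btwn
    (show (0:ℝ) < δ / (Sa + 1) from div_pos hδpos (by linarith))
  have hε0' : (0:ℚ) < ε := by exact_mod_cast hε0
  have hεSa : (ε:ℝ) * (Sa + 1) < δ := by
    rw [lt_div_iff₀ (show (0:ℝ) < Sa + 1 by linarith)] at hεlt
    linarith
  have hch : ∀ i, ∃ q : ℚ, cR i < (q:ℝ) ∧ (q:ℝ) < cR i + ε :=
    fun i => exists_rat_btwn (by linarith [hε0])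
  choose c hc1 hc2 using hch
  have hcpos : ∀ i, 0 < c i := by
    intro i
    have : (0:ℝ) < (c i : ℝ) := (hcRnn i).trans_lt (hc1 i)
    exact_mod_cast this
  refine ⟨c, hcpos, ?_⟩
  intro g hg
  have lower : ∀ b : Fin d →₀ ℕ, f (emb m b) ≤ ∑ i, (c i : ℝ) * ((b i : ℝ) / m) := by
    intro b
    rw [f_eq]
    apply Finset.sum_le_sum
    intro i _
    have hb : (0:ℝ) ≤ (b i : ℝ) / m := by positivity
    have : emb m b i = (b i : ℝ) / m := rfl
    rw [this, mul_comm]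
    exact mul_le_mul_of_nonneg_right (hc1 i).le hb
  have upper : (∑ i, (c i : ℝ) * ((g₁ i : ℝ) / m)) ≤ f (emb m g₁) + (ε:ℝ) * Sa := by
    rw [f_eq, hSa, Finset.mul_sum]
    rw [← Finset.sum_add_distrib]
    apply Finset.sum_le_sum
    intro i _
    have hb : (0:ℝ) ≤ (g₁ i : ℝ) / m := by positivity
    have h2 := hc2 i
    have : emb m g₁ i = (g₁ i : ℝ) / m := rfl
    rw [this]
    nlinarith
  have hreal : (∑ i, (c i : ℝ) * ((g₁ i : ℝ) / m)) < ∑ i, (c i : ℝ) * ((g i : ℝ) / m) := by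
    have h3 := hfg g hg
    have h4 := lower g
    have h5 : (ε:ℝ) * Sa < δ := by nlinarith
    rw [hδ] at h5
    linarith
  have hdiv : (∑ i, (c i : ℝ) * (g₁ i : ℝ)) / m < (∑ i, (c i : ℝ) * (g i : ℝ)) / m := by
    rw [Finset.sum_div, Finset.sum_div,
      Finset.sum_congr rfl (fun i _ => by ring :
        ∀ i ∈ Finset.univ, (c i : ℝ) * (g₁ i : ℝ) / m = (c i : ℝ) * ((g₁ i : ℝ) / m)),
      Finset.sum_congr rfl (fun i _ => by ring :
        ∀ i ∈ Finset.univ, (c i : ℝ) * (g i : ℝ) / m = (c i : ℝ) * ((g i : ℝ) / m))]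
    exact hreal
  have hlt : (∑ i, (c i : ℝ) * (g₁ i : ℝ)) < ∑ i, (c i : ℝ) * (g i : ℝ) :=
    (div_lt_div_iff_of_pos_right hm').mp hdiv
  have : ((wgt c g₁ : ℚ) : ℝ) < ((wgt c g : ℚ) : ℝ) := by
    rw [wgt, wgt]
    push_cast
    exact hlt
  exact_mod_cast this

lemma isOpen_ne_pset (w : Fin d → ℚ) :
    IsOpen {c : {c : Fin d → ℚ // ∀ i, 0 < c i} | (∑ i, c.1 i * w i) ≠ 0} := by
  have hcont : Continuous fun c : {c : Fin d → ℚ // ∀ i, 0 < c i} => ∑ i, c.1 i * w i := by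
    apply continuous_finset_sum
    intro i _
    exact ((continuous_apply i).comp continuous_subtype_val).mul continuous_const
  have : {c : {c : Fin d → ℚ // ∀ i, 0 < c i} | (∑ i, c.1 i * w i) ≠ 0}
      = (fun c : {c : Fin d → ℚ // ∀ i, 0 < c i} => ∑ i, c.1 i * w i) ⁻¹' ({0}ᶜ) := rfl
  rw [this]
  exact hcont.isOpen_preimage _ isOpen_compl_singleton

lemma dense_ne_pset {w : Fin d → ℚ} (hw : w ≠ 0) :
    Dense {c : {c : Fin d → ℚ // ∀ i, 0 < c i} | (∑ i, c.1 i * w i) ≠ 0} := by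
  rw [Metric.dense_iff]
  intro x r hr
  by_cases hx : (∑ i, x.1 i * w i) ≠ 0
  · exact ⟨x, Metric.mem_ball_self hr, hx⟩
  · push_neg at hx
    obtain ⟨j, hj⟩ : ∃ j, w j ≠ 0 := by
      by_contra h; push_neg at h; exact hw (funext h)
    obtain ⟨t, ht0, htr⟩ := exists_rat_btwn (show (0:ℝ) < r from hr)
    have ht0' : (0:ℚ) < t := by exact_mod_cast ht0
    set c' : Fin d → ℚ := Function.update x.1 j (x.1 j + t) with hc'
    have hpos : ∀ i, 0 < c' i := by
      intro i
      by_cases h : i = j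
      · subst h; simp only [hc', Function.update_self]
        have := x.2 i; linarith
      · simp only [hc', Function.update_of_ne h]; exact x.2 i
    have hsum : (∑ i, c' i * w i) = (∑ i, x.1 i * w i) + t * w j := by
      have hterm : ∀ i, c' i * w i = x.1 i * w i + (if i = j then t * w j else 0) := by
        intro i
        by_cases h : i = j
        · subst h
          simp only [hc', Function.update_self, eq_self_iff_true, if_true]
          ring
        · simp only [hc', Function.update_of_ne h, h, if_false]
          ring
      rw [Finset.sum_congr rfl (fun i _ => hterm i), Finset.sum_add_distrib]
      congr 1
      simp
    refine ⟨⟨c', hpos⟩, ?_, ?_⟩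
    · rw [Metric.mem_ball, Subtype.dist_eq, dist_pi_lt_iff hr]
      intro i
      by_cases h : i = j
      · subst h
        simp only [hc', Function.update_self, Rat.dist_eq]
        push_cast
        rw [show ((x.1 i : ℝ) + (t:ℝ)) - (x.1 i : ℝ) = (t:ℝ) by ring, abs_of_pos ht0]
        exact htr
      · simp only [hc', Function.update_of_ne h, Rat.dist_eq, sub_self, abs_zero]
        exact hr
    · simp only [Set.mem_setOf_eq, hsum, hx, zero_add]
      exact mul_ne_zero (ne_of_gt ht0') hj

lemma vset_open_dense (W : Finset (Fin d → ℚ)) (hW : ∀ w ∈ W, w ≠ 0) :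
    IsOpen {c : {c : Fin d → ℚ // ∀ i, 0 < c i} | ∀ w ∈ W, (∑ i, c.1 i * w i) ≠ 0} ∧
      Dense {c : {c : Fin d → ℚ // ∀ i, 0 < c i} | ∀ w ∈ W, (∑ i, c.1 i * w i) ≠ 0} := by
  induction W using Finset.induction_on with
  | empty =>
      have : {c : {c : Fin d → ℚ // ∀ i, 0 < c i} |
          ∀ w ∈ (∅ : Finset (Fin d → ℚ)), (∑ i, c.1 i * w i) ≠ 0} = Set.univ := by
        ext c; simp
      rw [this]; exact ⟨isOpen_univ, dense_univ⟩
  | @insert a s ha ih =>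
      have hsplit : {c : {c : Fin d → ℚ // ∀ i, 0 < c i} |
            ∀ w ∈ insert a s, (∑ i, c.1 i * w i) ≠ 0}
          = {c : {c : Fin d → ℚ // ∀ i, 0 < c i} | (∑ i, c.1 i * a i) ≠ 0} ∩
            {c : {c : Fin d → ℚ // ∀ i, 0 < c i} | ∀ w ∈ s, (∑ i, c.1 i * w i) ≠ 0} := by
        ext c
        simp [Finset.mem_insert, forall_eq_or_imp]
      have ha0 : a ≠ 0 := hW a (Finset.mem_insert_self a s)
      have hs0 : ∀ w ∈ s, w ≠ 0 := fun w hw' => hW w (Finset.mem_insert_of_mem hw')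
      obtain ⟨iho, ihd⟩ := ih hs0
      rw [hsplit]
      exact ⟨(isOpen_ne_pset a).inter iho,
        (dense_ne_pset ha0).inter_of_isOpen_left ihd (isOpen_ne_pset a)⟩

end Aux

/-- Lemma 4 / Corollary `cor:delta`.  If two nonzero fractional
power series have substitutions `γᵢ^{[c]}` of equal order for all `c` in some open
dense subset of `ℚ₊^d`, then their Newton polytopes coincide. -/
theorem newtonPolytope_eq_of_generic_ord_eq {K : Type*} [Field K] {d : ℕ}
    (m : ℕ) (hm : 0 < m) (γ₁ γ₂ : MvPowerSeries (Fin d) K)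
    (h₁ : γ₁ ≠ 0) (h₂ : γ₂ ≠ 0)
    (H : ∃ U : Set {c : Fin d → ℚ // ∀ i, 0 < c i}, IsOpen U ∧ Dense U ∧
      ∀ c ∈ U, (substHahn m (c : Fin d → ℚ) (fun i => (c.2 i).le) γ₁).orderTop =
        (substHahn m (c : Fin d → ℚ) (fun i => (c.2 i).le) γ₂).orderTop) :
    NewtonPolytope m γ₁ = NewtonPolytope m γ₂ := by
  classical
  obtain ⟨U, hUo, hUd, hUeq⟩ := H
  set G₁ : Finset (Fin d →₀ ℕ) := (minS_finite γ₁).toFinset with hG₁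
  set G₂ : Finset (Fin d →₀ ℕ) := (minS_finite γ₂).toFinset with hG₂
  set W : Finset (Fin d → ℚ) :=
    (((G₁ ×ˢ G₁) ∪ (G₂ ×ˢ G₂)).filter (fun p => p.1 ≠ p.2)).image
      (fun p i => ((p.1 i : ℚ) - (p.2 i : ℚ))) with hW
  have hWne : ∀ w ∈ W, w ≠ 0 := by
    intro w hw
    rw [hW, Finset.mem_image] at hw
    obtain ⟨p, hp, rfl⟩ := hw
    rw [Finset.mem_filter] at hp
    intro hzero
    apply hp.2
    ext i
    have h0 : ((p.1 i : ℚ) - (p.2 i : ℚ)) = 0 := congrFun hzero i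
    have : ((p.1 i : ℚ)) = (p.2 i : ℚ) := by linarith
    exact_mod_cast this
  obtain ⟨hVo, hVd⟩ := vset_open_dense W hWne
  set V := {c : {c : Fin d → ℚ // ∀ i, 0 < c i} | ∀ w ∈ W, (∑ i, c.1 i * w i) ≠ 0} with hV
  have hdist12 : ∀ c ∈ V, ∀ p ∈ (G₁ ×ˢ G₁) ∪ (G₂ ×ˢ G₂),
      p.1 ≠ p.2 → wgt c.1 p.1 ≠ wgt c.1 p.2 := by
    intro c hc p hp hne heq
    have hwW : (fun i => ((p.1 i : ℚ) - (p.2 i : ℚ))) ∈ W := by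
      rw [hW]
      exact Finset.mem_image_of_mem _ (Finset.mem_filter.mpr ⟨hp, hne⟩)
    apply hc _ hwW
    rw [← wgt_sub_eq, heq, sub_self]
  have hdist₁ : ∀ c ∈ V, ∀ g ∈ minS γ₁, ∀ g' ∈ minS γ₁, g ≠ g' →
      wgt c.1 g ≠ wgt c.1 g' := by
    intro c hc g hg g' hg' hne
    exact hdist12 c hc (g, g') (Finset.mem_union_left _ (Finset.mem_product.mpr
      ⟨(minS_finite γ₁).mem_toFinset.mpr hg, (minS_finite γ₁).mem_toFinset.mpr hg'⟩)) hne
  have hdist₂ : ∀ c ∈ V, ∀ g ∈ minS γ₂, ∀ g' ∈ minS γ₂, g ≠ g' →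
      wgt c.1 g ≠ wgt c.1 g' := by
    intro c hc g hg g' hg' hne
    exact hdist12 c hc (g, g') (Finset.mem_union_right _ (Finset.mem_product.mpr
      ⟨(minS_finite γ₂).mem_toFinset.mpr hg, (minS_finite γ₂).mem_toFinset.mpr hg'⟩)) hne
  have hcontw : ∀ b : Fin d →₀ ℕ,
      Continuous fun c : {c : Fin d → ℚ // ∀ i, 0 < c i} => wgt c.1 b := by
    intro b
    apply continuous_finset_sum
    intro i _
    exact ((continuous_apply i).comp continuous_subtype_val).mul continuous_const
  have key : ∀ γa γb : MvPowerSeries (Fin d) K, γa ≠ 0 → γb ≠ 0 →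
      (∀ c ∈ U, (substHahn m (c : Fin d → ℚ) (fun i => (c.2 i).le) γa).orderTop =
        (substHahn m (c : Fin d → ℚ) (fun i => (c.2 i).le) γb).orderTop) →
      (∀ c ∈ V, ∀ g ∈ minS γa, ∀ g' ∈ minS γa, g ≠ g' → wgt c.1 g ≠ wgt c.1 g') →
      (∀ c ∈ V, ∀ g ∈ minS γb, ∀ g' ∈ minS γb, g ≠ g' → wgt c.1 g ≠ wgt c.1 g') →
      ∀ g ∈ minS γa, emb m g ∈ NewtonPolytope m γb := by
    intro γa γb ha hb hord hda hdb g hgmin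
    by_contra hnin
    obtain ⟨c₀, hc₀pos, hc₀⟩ := sep m hm γb hb g hnin
    set B : Set {c : Fin d → ℚ // ∀ i, 0 < c i} :=
      ⋂ g' ∈ (minS_finite γb).toFinset, {c | wgt c.1 g < wgt c.1 g'} with hB
    have hBo : IsOpen B := by
      rw [hB]
      exact isOpen_biInter_finset fun g' _ => isOpen_lt (hcontw g) (hcontw g')
    have hc₀B : (⟨c₀, hc₀pos⟩ : {c : Fin d → ℚ // ∀ i, 0 < c i}) ∈ B := by
      rw [hB]
      apply Set.mem_iInter₂.mpr
      intro g' hg'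
      exact hc₀ g' ((minS_finite γb).mem_toFinset.mp hg')
    have hUVd : Dense (U ∩ V) := hUd.inter_of_isOpen_right hVd hVo
    obtain ⟨c, hcB, hcU, hcV⟩ := hUVd.inter_open_nonempty B hBo ⟨_, hc₀B⟩
    obtain ⟨g₀a, hg₀a, hminA, huniqA⟩ := exists_good_min γa ha c.1 c.2 (hda c hcV)
    obtain ⟨g₀b, hg₀b, hminB, huniqB⟩ := exists_good_min γb hb c.1 c.2 (hdb c hcV)
    have hordA := orderTop_substHahn m hm γa c.1 c.2 g₀a (minS_subset _ hg₀a) hminA huniqA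
    have hordB := orderTop_substHahn m hm γb c.1 c.2 g₀b (minS_subset _ hg₀b) hminB huniqB
    have heq0 := hord c hcU
    rw [hordA, hordB] at heq0
    have heq1 : wgt c.1 g₀a / m = wgt c.1 g₀b / m := by exact_mod_cast heq0
    have hm' : (0:ℚ) < (m:ℚ) := by exact_mod_cast hm
    have heq2 : wgt c.1 g₀a = wgt c.1 g₀b := by
      rw [div_eq_div_iff (ne_of_gt hm') (ne_of_gt hm')] at heq1
      exact mul_right_cancel₀ (ne_of_gt hm') heq1
    have h3 : wgt c.1 g₀a ≤ wgt c.1 g := hminA g (minS_subset _ hgmin)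
    have h4 : wgt c.1 g < wgt c.1 g₀b :=
      Set.mem_iInter₂.mp hcB g₀b ((minS_finite γb).mem_toFinset.mpr hg₀b)
    linarith
  have incl : ∀ γa γb : MvPowerSeries (Fin d) K,
      (∀ g ∈ minS γa, emb m g ∈ NewtonPolytope m γb) →
      NewtonPolytope m γa ⊆ NewtonPolytope m γb := by
    intro γa γb hkey
    have hconv : Convex ℝ (NewtonPolytope m γb) := convex_convexHull ℝ _
    have hbase : {p : Fin d → ℝ | ∃ a : Fin d →₀ ℕ, MvPowerSeries.coeff a γa ≠ 0 ∧
        ∀ i, ((a i : ℝ) / m) ≤ p i} ⊆ NewtonPolytope m γb := by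
      rintro p ⟨a, hacoeff, hap⟩
      obtain ⟨g, hgmin, hga⟩ := exists_minS_le (show a ∈ suppS γa from hacoeff)
      have hgin := hkey g hgmin
      rw [np_eq m hm γb] at hgin ⊢
      obtain ⟨y, hy, q, hq, hsum⟩ := hgin
      have hm' : (0:ℝ) < (m:ℝ) := by exact_mod_cast hm
      refine ⟨y, hy, q + (p - emb m g), ?_, ?_⟩
      · intro i
        have h1 := hq i
        have hga' : (g i : ℝ) ≤ (a i : ℝ) := by exact_mod_cast Finsupp.le_def.mp hga i
        have hle : (g i : ℝ) / m ≤ (a i : ℝ) / m := (div_le_div_iff_of_pos_right hm').mpr hga'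
        have h2 := hap i
        simp only [Pi.add_apply, Pi.sub_apply, emb]
        have : emb m g i = (g i : ℝ) / m := rfl
        linarith
      · show y + (q + (p - emb m g)) = p
        have hsum' : y + q = emb m g := hsum
        rw [← add_assoc, hsum']
        abel
    exact convexHull_min hbase hconv
  exact Set.Subset.antisymm
    (incl γ₁ γ₂ (key γ₁ γ₂ h₁ h₂ hUeq hdist₁ hdist₂))
    (incl γ₂ γ₁ (key γ₂ γ₁ h₂ h₁ (fun c hc => (hUeq c hc).symm) hdist₂ hdist₁))

end QOPaper
end
end

section
/- For any irreducible quasi-ordinary Weierstrass polynomials f, g, h ∈ K[[X]][Y] and any ω ∈ ℝ_+^d, the weighted contact satisfies the strong triangle inequality: cont_ω(f,g) ≥ min{cont_ω(f,h), cont_ω(h,g)}. -/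
open scoped Pointwise ENNReal

noncomputable section

namespace QOPaper

/-- An irreducible quasi-ordinary Weierstrass polynomial `f ∈ K[[X]][Y]` of degree
`n`, together with its roots in `K[[X^{1/m}]]` (Abhyankar–Jung). -/
structure IQOW (K : Type*) [Field K] (d m n : ℕ) where
  f : Polynomial (MvPowerSeries (Fin d) K)
  α : Fin n → MvPowerSeries (Fin d) K
  hm : 0 < m
  hn : 0 < n
  monic : f.Monic
  degf : f.natDegree = n
  inKX : PolyInKX m f
  weierstrass : ∀ i < n, MvPowerSeries.constantCoeff (f.coeff i) = 0
  splits : f = ∏ i, (Polynomial.X - Polynomial.C (α i))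
  irred : IrreducibleOverKX m f
  quasiOrdinary : ∃ (q : Fin d →₀ ℕ) (u : MvPowerSeries (Fin d) K),
      MvPowerSeries.constantCoeff u ≠ 0 ∧
      ∏ p ∈ Finset.univ.offDiag, (α p.1 - α p.2) = u * MvPowerSeries.monomial q 1

end QOPaper


/-! ### Auxiliary development for Statement 16 -/

namespace QOPaper

variable {K : Type*} [Field K] {d : ℕ}

lemma coeff_twist (ε : Fin d → K) (γ : MvPowerSeries (Fin d) K) (a : Fin d →₀ ℕ) :
    MvPowerSeries.coeff a (twist ε γ) = (∏ i, ε i ^ (a i)) * MvPowerSeries.coeff a γ := rfl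

lemma twist_add (ε : Fin d → K) (x y : MvPowerSeries (Fin d) K) :
    twist ε (x + y) = twist ε x + twist ε y := by
  ext a; simp [coeff_twist, map_add, mul_add]

lemma twist_mul (ε : Fin d → K) (x y : MvPowerSeries (Fin d) K) :
    twist ε (x * y) = twist ε x * twist ε y := by
  classical
  ext a
  rw [coeff_twist, MvPowerSeries.coeff_mul, MvPowerSeries.coeff_mul, Finset.mul_sum]
  refine Finset.sum_congr rfl ?_
  rintro ⟨b, c⟩ hbc
  replace hbc : b + c = a := Finset.HasAntidiagonal.mem_antidiagonal.mp hbc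
  rw [coeff_twist, coeff_twist]
  have : (∏ i, ε i ^ (a i)) = (∏ i, ε i ^ (b i)) * (∏ i, ε i ^ (c i)) := by
    rw [← Finset.prod_mul_distrib]
    refine Finset.prod_congr rfl fun i _ => ?_
    rw [← pow_add, ← hbc, Finsupp.add_apply]
  rw [this]; ring

lemma twist_one (ε : Fin d → K) : twist ε (1 : MvPowerSeries (Fin d) K) = 1 := by
  classical
  ext a
  rw [coeff_twist, MvPowerSeries.coeff_one]
  split_ifs with h
  · subst h; simp
  · simp

/-- `twist ε` as a ring homomorphism. -/
def twistHom (ε : Fin d → K) : MvPowerSeries (Fin d) K →+* MvPowerSeries (Fin d) K where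
  toFun := twist ε
  map_one' := twist_one ε
  map_mul' := twist_mul ε
  map_zero' := by ext a; simp [coeff_twist]
  map_add' := twist_add ε

lemma twist_sub (ε : Fin d → K) (x y : MvPowerSeries (Fin d) K) :
    twist ε (x - y) = twist ε x - twist ε y :=
  map_sub (twistHom ε) x y

lemma twist_twist (ε δ : Fin d → K) (γ : MvPowerSeries (Fin d) K) :
    twist ε (twist δ γ) = twist (ε * δ) γ := by
  ext a
  rw [coeff_twist, coeff_twist, coeff_twist, ← mul_assoc, ← Finset.prod_mul_distrib]
  congr 1
  exact Finset.prod_congr rfl fun i _ => by rw [Pi.mul_apply, mul_pow]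

lemma twist_id (γ : MvPowerSeries (Fin d) K) : twist (1 : Fin d → K) γ = γ := by
  ext a; rw [coeff_twist]; simp

lemma twist_inKX {m : ℕ} {ε : Fin d → K} (hε : ∀ i, ε i ^ m = 1)
    {γ : MvPowerSeries (Fin d) K} (hγ : InKX m γ) : twist ε γ = γ := by
  ext a
  rw [coeff_twist]
  by_cases h : MvPowerSeries.coeff a γ = 0
  · simp [h]
  · have : (∏ i, ε i ^ (a i)) = 1 := by
      refine Finset.prod_eq_one fun i _ => ?_
      obtain ⟨c, hc⟩ := hγ a h i
      rw [hc, pow_mul, hε i, one_pow]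
    rw [this, one_mul]

/-! #### `ordW` lemmas -/

lemma min_ordW_le {m : ℕ} {ω : Fin d → ℝ} {x y γ : MvPowerSeries (Fin d) K}
    (h : ∀ a, MvPowerSeries.coeff a γ ≠ 0 →
      MvPowerSeries.coeff a x ≠ 0 ∨ MvPowerSeries.coeff a y ≠ 0) :
    min (ordW m ω x) (ordW m ω y) ≤ ordW m ω γ := by
  refine le_sInf ?_
  rintro v ⟨a, ha, rfl⟩
  rcases h a ha with h' | h'
  · exact min_le_of_left_le (sInf_le ⟨a, h', rfl⟩)
  · exact min_le_of_right_le (sInf_le ⟨a, h', rfl⟩)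

lemma ordW_congr {m : ℕ} {ω : Fin d → ℝ} {x y : MvPowerSeries (Fin d) K}
    (h : ∀ a, MvPowerSeries.coeff a x ≠ 0 ↔ MvPowerSeries.coeff a y ≠ 0) :
    ordW m ω x = ordW m ω y := by
  unfold ordW
  congr 1
  ext v
  constructor <;> rintro ⟨a, ha, rfl⟩
  · exact ⟨a, (h a).mp ha, rfl⟩
  · exact ⟨a, (h a).mpr ha, rfl⟩

lemma ordW_ultra {m : ℕ} {ω : Fin d → ℝ} (x y z : MvPowerSeries (Fin d) K) :
    min (ordW m ω (x - y)) (ordW m ω (y - z)) ≤ ordW m ω (x - z) := by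
  refine min_ordW_le fun a ha => ?_
  by_contra hc
  push_neg at hc
  obtain ⟨h1, h2⟩ := hc
  apply ha
  have : x - z = (x - y) + (y - z) := by ring
  rw [this, map_add, h1, h2, add_zero]

lemma ordW_neg {m : ℕ} {ω : Fin d → ℝ} (x : MvPowerSeries (Fin d) K) :
    ordW m ω (-x) = ordW m ω x :=
  ordW_congr fun a => by simp

lemma ordW_sub_symm {m : ℕ} {ω : Fin d → ℝ} (x y : MvPowerSeries (Fin d) K) :
    ordW m ω (x - y) = ordW m ω (y - x) := by
  rw [← ordW_neg (x - y), neg_sub]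

lemma ordW_twist {m : ℕ} {ω : Fin d → ℝ} {ε : Fin d → K} (hε : ∀ i, ε i ≠ 0)
    (γ : MvPowerSeries (Fin d) K) : ordW m ω (twist ε γ) = ordW m ω γ := by
  refine ordW_congr fun a => ?_
  rw [coeff_twist]
  have hprod : (∏ i, ε i ^ (a i)) ≠ 0 :=
    Finset.prod_ne_zero_iff.mpr fun i _ => pow_ne_zero _ (hε i)
  constructor
  · intro h h0; exact h (by rw [h0, mul_zero])
  · exact fun h => mul_ne_zero hprod h

/-! #### `m`-torsion twists and the Galois action on roots -/

/-- m-torsion tuples. -/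
def mTor (m : ℕ) (ε : Fin d → K) : Prop := ∀ t, ε t ^ m = 1

lemma mTor.ne_zero {m : ℕ} (hm : 0 < m) {ε : Fin d → K} (hε : mTor m ε) (i : Fin d) :
    ε i ≠ 0 := fun h => by
  have := hε i
  rw [h, zero_pow hm.ne'] at this
  exact zero_ne_one this

lemma mTor.one {m : ℕ} : mTor m (1 : Fin d → K) := fun _ => one_pow m

lemma mTor.mul {m : ℕ} {ε δ : Fin d → K} (hε : mTor m ε) (hδ : mTor m δ) :
    mTor m (ε * δ) := fun t => by
  rw [Pi.mul_apply, mul_pow, hε t, hδ t, one_mul]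

lemma mTor.inv {m : ℕ} {ε : Fin d → K} (hε : mTor m ε) :
    mTor m (fun t => (ε t)⁻¹) := fun t => by
  show (ε t)⁻¹ ^ m = 1
  rw [inv_pow, hε t, inv_one]

lemma twist_inv_cancel {m : ℕ} (hm : 0 < m) {ε : Fin d → K} (hε : mTor m ε)
    (γ : MvPowerSeries (Fin d) K) : twist (fun t => (ε t)⁻¹) (twist ε γ) = γ := by
  rw [twist_twist]
  have : (fun t => (ε t)⁻¹) * ε = 1 := by
    funext t
    exact inv_mul_cancel₀ (hε.ne_zero hm t)
  rw [this, twist_id]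

lemma twist_injective {m : ℕ} (hm : 0 < m) {ε : Fin d → K} (hε : mTor m ε) :
    Function.Injective (twist ε : MvPowerSeries (Fin d) K → MvPowerSeries (Fin d) K) := by
  intro x y h
  have := congrArg (twist fun t => (ε t)⁻¹) h
  rwa [twist_inv_cancel hm hε, twist_inv_cancel hm hε] at this

namespace IQOW

variable {m n : ℕ} (A : IQOW K d m n)

lemma alpha_injective : Function.Injective A.α := by
  intro i j hij
  by_contra hne
  obtain ⟨q, u, hu, heq⟩ := A.quasiOrdinary
  have hprod : ∏ p ∈ Finset.univ.offDiag, (A.α p.1 - A.α p.2) ≠ 0 := by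
    rw [heq]
    refine mul_ne_zero ?_ ?_
    · intro h0; exact hu (by rw [h0, map_zero])
    · intro h0
      have := congrArg (MvPowerSeries.coeff q) h0
      rw [MvPowerSeries.coeff_monomial_same, map_zero] at this
      exact one_ne_zero this
  rw [Finset.prod_ne_zero_iff] at hprod
  have hmem : ((i, j) : Fin n × Fin n) ∈ Finset.univ.offDiag := by
    simp [Finset.mem_offDiag, hne]
  exact hprod _ hmem (by rw [hij, sub_self])

lemma eval_root (i : Fin n) : A.f.eval (A.α i) = 0 := by
  rw [A.splits, Polynomial.eval_prod]
  refine Finset.prod_eq_zero (Finset.mem_univ i) ?_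
  simp

lemma root_eq {y : MvPowerSeries (Fin d) K} (hy : A.f.eval y = 0) : ∃ i, y = A.α i := by
  rw [A.splits, Polynomial.eval_prod] at hy
  obtain ⟨i, _, hi⟩ := Finset.prod_eq_zero_iff.mp hy
  refine ⟨i, ?_⟩
  simpa [sub_eq_zero] using hi

lemma map_twist_f {ε : Fin d → K} (hε : mTor m ε) : A.f.map (twistHom ε) = A.f := by
  refine Polynomial.ext fun b => ?_
  rw [Polynomial.coeff_map]
  exact twist_inKX hε (A.inKX b)

lemma eval_twist {ε : Fin d → K} (hε : mTor m ε) (x : MvPowerSeries (Fin d) K) :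
    A.f.eval (twist ε x) = twist ε (A.f.eval x) := by
  conv_lhs => rw [← A.map_twist_f hε]
  rw [Polynomial.eval_map]
  exact Polynomial.eval₂_hom (twistHom ε) x

/-- Every `m`-torsion twist permutes the roots of `f`. -/
lemma exists_perm {ε : Fin d → K} (hε : mTor m ε) :
    ∃ σ : Equiv.Perm (Fin n), ∀ i, twist ε (A.α i) = A.α (σ i) := by
  have hroot : ∀ i, ∃ j, twist ε (A.α i) = A.α j := by
    intro i
    refine A.root_eq ?_
    rw [A.eval_twist hε, A.eval_root i]
    show twist ε 0 = 0
    ext a; simp [coeff_twist]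
  choose σ₀ hσ₀ using hroot
  have hinj : Function.Injective σ₀ := by
    intro i j hij
    apply A.alpha_injective
    apply twist_injective A.hm hε
    rw [hσ₀ i, hσ₀ j, hij]
  exact ⟨Equiv.ofBijective σ₀ (Finite.injective_iff_bijective.mp hinj),
    fun i => hσ₀ i⟩

end IQOW

section Trans

variable [IsAlgClosed K] [CharZero K]

/-- A series invariant under all `m`-torsion twists lies in `K[[X]]`. -/
lemma invariant_inKX {m : ℕ} (hm : 0 < m) {c : MvPowerSeries (Fin d) K}
    (h : ∀ ε : Fin d → K, mTor m ε → twist ε c = c) : InKX m c := by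
  intro a ha i
  haveI : NeZero ((m : K)) := ⟨Nat.cast_ne_zero.mpr hm.ne'⟩
  obtain ⟨ζ, hζ⟩ := HasEnoughRootsOfUnity.exists_primitiveRoot K m
  set ε : Fin d → K := fun t => if t = i then ζ else 1 with hεdef
  have hε : mTor m ε := by
    intro t
    by_cases ht : t = i <;> simp [hεdef, ht, hζ.pow_eq_one]
  have := congrArg (MvPowerSeries.coeff a) (h ε hε)
  rw [coeff_twist] at this
  have hprod : (∏ t, ε t ^ (a t)) = ζ ^ (a i) := by
    have : ∀ t, ε t ^ (a t) = if t = i then ζ ^ (a t) else 1 := by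
      intro t; by_cases ht : t = i <;> simp [hεdef, ht]
    rw [Finset.prod_congr rfl (fun t _ => this t), Finset.prod_ite_eq']
    simp
  rw [hprod] at this
  have hζ1 : ζ ^ (a i) = 1 := by
    have := mul_right_cancel₀ ha (by rw [this, one_mul] :
      ζ ^ (a i) * MvPowerSeries.coeff a c = 1 * MvPowerSeries.coeff a c)
    exact this
  exact hζ.dvd_of_pow_eq_one _ hζ1

/-- The group of `m`-torsion twists acts transitively on the roots of an
irreducible quasi-ordinary Weierstrass polynomial. -/
lemma IQOW.trans {m n : ℕ} (A : IQOW K d m n) (i j : Fin n) :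
    ∃ ε : Fin d → K, mTor m ε ∧ twist ε (A.α i) = A.α j := by
  classical
  set S : Finset (Fin n) :=
    Finset.univ.filter (fun k => ∃ ε : Fin d → K, mTor m ε ∧ twist ε (A.α i) = A.α k)
    with hSdef
  have hmemS : ∀ k, k ∈ S ↔ ∃ ε : Fin d → K, mTor m ε ∧ twist ε (A.α i) = A.α k := by
    intro k; simp [hSdef]
  have hiS : i ∈ S := (hmemS i).mpr ⟨1, mTor.one, twist_id _⟩
  have hstab : ∀ (ε : Fin d → K), mTor m ε → ∀ (σ : Equiv.Perm (Fin n)),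
      (∀ k, twist ε (A.α k) = A.α (σ k)) → ∀ k ∈ S, σ k ∈ S := by
    intro ε hε σ hσ k hk
    obtain ⟨δ, hδ, hδe⟩ := (hmemS k).mp hk
    refine (hmemS (σ k)).mpr ⟨ε * δ, hε.mul hδ, ?_⟩
    rw [← twist_twist, hδe, hσ k]
  suffices hSuniv : S = Finset.univ by
    have hjS : j ∈ S := hSuniv ▸ Finset.mem_univ j
    exact (hmemS j).mp hjS
  by_contra hSne
  set g₀ : Polynomial (MvPowerSeries (Fin d) K) :=
    ∏ k ∈ S, (Polynomial.X - Polynomial.C (A.α k)) with hg₀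
  set h₀ : Polynomial (MvPowerSeries (Fin d) K) :=
    ∏ k ∈ Sᶜ, (Polynomial.X - Polynomial.C (A.α k)) with hh₀
  have hfact : A.f = g₀ * h₀ := by
    rw [A.splits, hg₀, hh₀, Finset.prod_mul_prod_compl]
  have hgM : g₀.Monic :=
    Polynomial.monic_prod_of_monic _ _ fun k _ => Polynomial.monic_X_sub_C _
  have hhM : h₀.Monic :=
    Polynomial.monic_prod_of_monic _ _ fun k _ => Polynomial.monic_X_sub_C _
  have hmapprod : ∀ (ε : Fin d → K), mTor m ε → ∀ T : Finset (Fin n),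
      (∏ k ∈ T, (Polynomial.X - Polynomial.C (A.α k))).map (twistHom ε)
        = ∏ k ∈ T, (Polynomial.X - Polynomial.C (twist ε (A.α k))) := by
    intro ε hε T
    rw [Polynomial.map_prod]
    exact Finset.prod_congr rfl fun k _ => by
      rw [Polynomial.map_sub, Polynomial.map_X, Polynomial.map_C]; rfl
  have hreindex : ∀ (σ : Equiv.Perm (Fin n)) (T : Finset (Fin n)),
      (∀ k ∈ T, σ k ∈ T) →
      ∏ k ∈ T, (Polynomial.X - Polynomial.C (A.α (σ k)))
        = ∏ k ∈ T, (Polynomial.X - Polynomial.C (A.α k)) := by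
    intro σ T hT
    have himg : T.image σ = T := by
      apply Finset.eq_of_subset_of_card_le
      · intro x hx
        obtain ⟨k, hk, rfl⟩ := Finset.mem_image.mp hx
        exact hT k hk
      · rw [Finset.card_image_of_injective _ σ.injective]
    conv_rhs => rw [← himg]
    rw [Finset.prod_image (fun a _ b _ h => σ.injective h)]
  have hstabc : ∀ (ε : Fin d → K), mTor m ε → ∀ (σ : Equiv.Perm (Fin n)),
      (∀ k, twist ε (A.α k) = A.α (σ k)) → ∀ k ∈ Sᶜ, σ k ∈ Sᶜ := by
    intro ε hε σ hσ k hk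
    rw [Finset.mem_compl] at hk ⊢
    intro hσk
    apply hk
    obtain ⟨δ, hδ, hδe⟩ := (hmemS (σ k)).mp hσk
    refine (hmemS k).mpr ⟨(fun t => (ε t)⁻¹) * δ, hε.inv.mul hδ, ?_⟩
    rw [← twist_twist, hδe, ← hσ k, twist_inv_cancel A.hm hε]
  have hinv : ∀ (ε : Fin d → K), mTor m ε →
      g₀.map (twistHom ε) = g₀ ∧ h₀.map (twistHom ε) = h₀ := by
    intro ε hε
    obtain ⟨σ, hσ⟩ := A.exists_perm hε
    constructor
    · rw [hg₀, hmapprod ε hε]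
      rw [Finset.prod_congr rfl fun k _ => by rw [hσ k]]
      exact hreindex σ S (hstab ε hε σ hσ)
    · rw [hh₀, hmapprod ε hε]
      rw [Finset.prod_congr rfl fun k _ => by rw [hσ k]]
      exact hreindex σ Sᶜ (hstabc ε hε σ hσ)
  have hgKX : PolyInKX m g₀ := by
    intro b
    refine invariant_inKX A.hm fun ε hε => ?_
    have := congrArg (fun p => Polynomial.coeff p b) ((hinv ε hε).1)
    exact (by simpa [Polynomial.coeff_map] using this : twistHom ε (g₀.coeff b) = g₀.coeff b)
  have hhKX : PolyInKX m h₀ := by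
    intro b
    refine invariant_inKX A.hm fun ε hε => ?_
    have := congrArg (fun p => Polynomial.coeff p b) ((hinv ε hε).2)
    exact (by simpa [Polynomial.coeff_map] using this : twistHom ε (h₀.coeff b) = h₀.coeff b)
  have hdegg : g₀.natDegree = S.card := by
    rw [hg₀, Polynomial.natDegree_prod_of_monic _ _
      (fun k _ => Polynomial.monic_X_sub_C _)]
    simp
  have hdegh : h₀.natDegree = Sᶜ.card := by
    rw [hh₀, Polynomial.natDegree_prod_of_monic _ _
      (fun k _ => Polynomial.monic_X_sub_C _)]
    simp
  rcases A.irred.2 g₀ h₀ hgM hhM hgKX hhKX hfact with h0 | h0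
  · rw [hdegg] at h0
    exact absurd (Finset.card_eq_zero.mp h0 ▸ hiS) (Finset.notMem_empty i)
  · rw [hdegh] at h0
    apply hSne
    have hc : Sᶜ = ∅ := Finset.card_eq_zero.mp h0
    refine Finset.eq_univ_of_forall fun k => ?_
    by_contra hk
    have : k ∈ Sᶜ := Finset.mem_compl.mpr hk
    rw [hc] at this
    exact Finset.notMem_empty k this

end Trans

/-! #### Abstract strong triangle inequality for homogeneous families in an
ultrametric situation -/

section Key

variable {V E : Type*} (o : V → V → ℝ≥0∞) (act : E → V → V)

lemma ultra_eq (osymm : ∀ x y, o x y = o y x)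
    (oultra : ∀ x y z, min (o x y) (o y z) ≤ o x z)
    {x y z : V} (h : o x z < o x y) : o y z = o x z := by
  refine le_antisymm ?_ ?_
  · by_contra hc
    push_neg at hc
    have := oultra x y z
    rw [min_le_iff] at this
    rcases this with h' | h'
    · exact absurd h' (not_le.mpr h)
    · exact absurd h' (not_le.mpr hc)
  · have := oultra y x z
    rw [osymm y x] at this
    calc o x z = min (o x y) (o x z) := (min_eq_right h.le).symm
    _ ≤ o y z := this

variable (hiso : ∀ e x y, o (act e x) (act e y) = o x y)

section Family
variable {n : ℕ} (φ : Fin n → V)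
  (hp : ∀ e, ∃ σ : Equiv.Perm (Fin n), ∀ j, act e (φ j) = φ (σ j))

include hiso hp in
lemma sumconst (e : E) (x : V) :
    ∑ j, o (φ j) (act e x) = ∑ j, o (φ j) x := by
  obtain ⟨σ, hσ⟩ := hp e
  have h1 : ∀ j, o (φ j) (act e x) = o (φ (σ.symm j)) x := by
    intro j
    have : φ j = act e (φ (σ.symm j)) := by rw [hσ, Equiv.apply_symm_apply]
    rw [this, hiso]
  rw [Finset.sum_congr rfl fun j _ => h1 j]
  exact Equiv.sum_comp σ.symm fun j => o (φ j) x

include hiso hp in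
lemma sumconst_orbit {x x' : V} (h : ∃ e, act e x = x') :
    ∑ j, o (φ j) x = ∑ j, o (φ j) x' := by
  obtain ⟨e, rfl⟩ := h
  exact (sumconst o act hiso φ hp e x).symm

include hiso hp in
lemma supconst (e : E) (x : V) :
    (Finset.univ.sup fun j => o (φ j) (act e x)) = Finset.univ.sup fun j => o (φ j) x := by
  obtain ⟨σ, hσ⟩ := hp e
  have h1 : ∀ j, o (φ j) (act e x) = o (φ (σ.symm j)) x := by
    intro j
    have : φ j = act e (φ (σ.symm j)) := by rw [hσ, Equiv.apply_symm_apply]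
    rw [this, hiso]
  rw [Finset.sup_congr rfl fun j _ => h1 j]
  refine le_antisymm (Finset.sup_le fun j _ =>
    Finset.le_sup (f := fun j => o (φ j) x) (Finset.mem_univ _)) ?_
  refine Finset.sup_le fun j _ => ?_
  have := Finset.le_sup (f := fun j => o (φ (σ.symm j)) x) (Finset.mem_univ (σ j))
  simpa using this

include hiso hp in
lemma supconst_orbit {x x' : V} (h : ∃ e, act e x = x') :
    (Finset.univ.sup fun j => o (φ j) x) = Finset.univ.sup fun j => o (φ j) x' := by
  obtain ⟨e, rfl⟩ := h
  exact (supconst o act hiso φ hp e x).symm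

end Family

lemma profile {n : ℕ} (φ : Fin n → V)
    (osymm : ∀ x y, o x y = o y x)
    (oultra : ∀ x y z, min (o x y) (o y z) ≤ o x z)
    (x : V) (istar : Fin n)
    (hstar : o (φ istar) x = Finset.univ.sup fun i => o (φ i) x) (i : Fin n) :
    o (φ i) x = min (o (φ i) (φ istar)) (Finset.univ.sup fun i => o (φ i) x) := by
  set u := Finset.univ.sup fun i => o (φ i) x with hu
  have hle : o (φ i) x ≤ u :=
    Finset.le_sup (f := fun i => o (φ i) x) (Finset.mem_univ i)
  by_cases hlt : o (φ i) (φ istar) < u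
  · have h1 : o (φ istar) (φ i) < o (φ istar) x := by
      rw [osymm (φ istar) (φ i), hstar]; exact hlt
    have := ultra_eq o osymm oultra h1
    rw [osymm x (φ i)] at this
    rw [this, osymm (φ istar) (φ i), min_eq_left hlt.le]
  · push_neg at hlt
    rw [min_eq_right hlt]
    refine le_antisymm hle ?_
    have := oultra (φ i) (φ istar) x
    rw [hstar] at this
    calc u = min u u := (min_self u).symm
    _ ≤ min (o (φ i) (φ istar)) u := min_le_min hlt le_rfl
    _ ≤ o (φ i) x := this

end Key

lemma cancel_div {n k : ℕ} (hn : 0 < n) (x : ℝ≥0∞) :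
    ((n • x) / ((n * k : ℕ) : ℝ≥0∞)) = x / ((k : ℕ) : ℝ≥0∞) := by
  rw [nsmul_eq_mul, Nat.cast_mul]
  exact ENNReal.mul_div_mul_left x _ (by exact_mod_cast hn.ne') (ENNReal.natCast_ne_top n)

lemma cancel_div' {n k : ℕ} (hn : 0 < n) (x : ℝ≥0∞) :
    ((n • x) / ((k * n : ℕ) : ℝ≥0∞)) = x / ((k : ℕ) : ℝ≥0∞) := by
  rw [nsmul_eq_mul, Nat.cast_mul, mul_comm ((k:ℕ) : ℝ≥0∞)]
  exact ENNReal.mul_div_mul_left x _ (by exact_mod_cast hn.ne') (ENNReal.natCast_ne_top n)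

lemma key {V E : Type*} (o : V → V → ℝ≥0∞) (act : E → V → V)
    (osymm : ∀ x y, o x y = o y x)
    (oultra : ∀ x y z, min (o x y) (o y z) ≤ o x z)
    (hiso : ∀ e x y, o (act e x) (act e y) = o x y)
    {n₁ n₂ n₃ : ℕ} (hn₁ : 0 < n₁) (hn₂ : 0 < n₂) (hn₃ : 0 < n₃)
    (α : Fin n₁ → V) (β : Fin n₂ → V) (γ : Fin n₃ → V)
    (hpA : ∀ e, ∃ σ : Equiv.Perm (Fin n₁), ∀ i, act e (α i) = α (σ i))
    (hpB : ∀ e, ∃ σ : Equiv.Perm (Fin n₂), ∀ j, act e (β j) = β (σ j))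
    (htA : ∀ i i', ∃ e, act e (α i) = α i')
    (htB : ∀ j j', ∃ e, act e (β j) = β j')
    (htC : ∀ k k', ∃ e, act e (γ k) = γ k') :
    min ((∑ i, ∑ k, o (α i) (γ k)) / ((n₁ * n₃ : ℕ) : ℝ≥0∞))
        ((∑ k, ∑ j, o (γ k) (β j)) / ((n₃ * n₂ : ℕ) : ℝ≥0∞))
      ≤ (∑ i, ∑ j, o (α i) (β j)) / ((n₁ * n₂ : ℕ) : ℝ≥0∞) := by
  have i₀ : Fin n₁ := ⟨0, hn₁⟩
  have j₀ : Fin n₂ := ⟨0, hn₂⟩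
  have k₀ : Fin n₃ := ⟨0, hn₃⟩
  set u := Finset.univ.sup fun i => o (α i) (β j₀) with hu
  set t := Finset.univ.sup fun i => o (α i) (γ k₀) with ht
  have hcolC : ∀ k, (∑ i, o (α i) (γ k)) = ∑ i, o (α i) (γ k₀) := fun k =>
    sumconst_orbit o act hiso α hpA (htC k k₀)
  have hcolB : ∀ j, (∑ i, o (α i) (β j)) = ∑ i, o (α i) (β j₀) := fun j =>
    sumconst_orbit o act hiso α hpA (htB j j₀)
  have NAC : (∑ i, ∑ k, o (α i) (γ k)) = n₃ • ∑ i, o (α i) (γ k₀) := by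
    rw [Finset.sum_comm, Finset.sum_congr rfl fun k _ => hcolC k, Finset.sum_const,
      Finset.card_univ, Fintype.card_fin]
  have NAB : (∑ i, ∑ j, o (α i) (β j)) = n₂ • ∑ i, o (α i) (β j₀) := by
    rw [Finset.sum_comm, Finset.sum_congr rfl fun j _ => hcolB j, Finset.sum_const,
      Finset.card_univ, Fintype.card_fin]
  have hne : (Finset.univ : Finset (Fin n₁)).Nonempty := ⟨i₀, Finset.mem_univ i₀⟩
  obtain ⟨iu, _, hiu⟩ := Finset.exists_mem_eq_sup Finset.univ hne (fun i => o (α i) (β j₀))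
  obtain ⟨it, _, hit⟩ := Finset.exists_mem_eq_sup Finset.univ hne (fun i => o (α i) (γ k₀))
  by_cases hut : t ≤ u
  · -- `cont(A,B) ≥ cont(A,C)`
    refine min_le_of_left_le ?_
    rw [NAC, NAB, cancel_div' hn₃, cancel_div' hn₂]
    refine ENNReal.div_le_div_right ?_ _
    have prof_b : ∀ i, o (α i) (β j₀) = min (o (α i) (α iu)) u :=
      profile o α osymm oultra (β j₀) iu hiu.symm
    have prof_c : ∀ i, o (α i) (γ k₀) = min (o (α i) (α it)) t :=
      profile o α osymm oultra (γ k₀) it hit.symm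
    obtain ⟨e, he⟩ := htA it iu
    obtain ⟨σ, hσ⟩ := hpA e
    have hre : ∀ i, o (α i) (α iu) = o (α (σ.symm i)) (α it) := by
      intro i
      have h1 : α i = act e (α (σ.symm i)) := by rw [hσ, Equiv.apply_symm_apply]
      rw [h1, ← he, hiso]
    calc (∑ i, o (α i) (γ k₀)) = ∑ i, min (o (α i) (α it)) t :=
          Finset.sum_congr rfl fun i _ => prof_c i
    _ = ∑ i, min (o (α (σ.symm i)) (α it)) t :=
          (Equiv.sum_comp σ.symm fun i => min (o (α i) (α it)) t).symm
    _ = ∑ i, min (o (α i) (α iu)) t :=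
          Finset.sum_congr rfl fun i _ => by rw [hre i]
    _ ≤ ∑ i, min (o (α i) (α iu)) u :=
          Finset.sum_le_sum fun i _ => min_le_min le_rfl hut
    _ = ∑ i, o (α i) (β j₀) :=
          Finset.sum_congr rfl fun i _ => (prof_b i).symm
  · -- `cont(A,B) = cont(C,B)`
    push_neg at hut
    have hdepthB : ∀ j, o (α it) (β j) ≤ u := by
      intro j
      have h1 : o (α it) (β j) ≤ Finset.univ.sup fun i => o (α i) (β j) :=
        Finset.le_sup (f := fun i => o (α i) (β j)) (Finset.mem_univ it)
      have h2 : (Finset.univ.sup fun i => o (α i) (β j)) = u :=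
        supconst_orbit o act hiso α hpA (htB j j₀)
      rw [h2] at h1; exact h1
    have heqCB : ∀ j, o (γ k₀) (β j) = o (α it) (β j) := by
      intro j
      refine ultra_eq o osymm oultra ?_
      rw [← hit]
      exact lt_of_le_of_lt (hdepthB j) hut
    have hrowA : ∀ i, (∑ j, o (α i) (β j)) = ∑ j, o (α it) (β j) := by
      intro i
      rw [Finset.sum_congr rfl fun j _ => osymm (α i) (β j),
        Finset.sum_congr rfl fun j _ => osymm (α it) (β j)]
      exact sumconst_orbit o act hiso β hpB (htA i it)
    have hrowC : ∀ k, (∑ j, o (γ k) (β j)) = ∑ j, o (γ k₀) (β j) := by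
      intro k
      rw [Finset.sum_congr rfl fun j _ => osymm (γ k) (β j),
        Finset.sum_congr rfl fun j _ => osymm (γ k₀) (β j)]
      exact sumconst_orbit o act hiso β hpB (htC k k₀)
    have NAB' : (∑ i, ∑ j, o (α i) (β j)) = n₁ • ∑ j, o (α it) (β j) := by
      rw [Finset.sum_congr rfl fun i _ => hrowA i, Finset.sum_const,
        Finset.card_univ, Fintype.card_fin]
    have NCB : (∑ k, ∑ j, o (γ k) (β j)) = n₃ • ∑ j, o (α it) (β j) := by
      rw [Finset.sum_congr rfl fun k _ => hrowC k, Finset.sum_const,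
        Finset.card_univ, Fintype.card_fin,
        Finset.sum_congr rfl fun j _ => heqCB j]
    refine min_le_of_right_le ?_
    rw [NAB', NCB, cancel_div hn₃, cancel_div hn₁]

end QOPaper

namespace QOPaper

/-- The weighted contact
`cont_ω(f,g) = (1/(deg f · deg g)) Σ_{α ∈ Zer f, β ∈ Zer g} ord_ω(α − β)`
of irreducible quasi-ordinary Weierstrass polynomials satisfies the strong triangle
inequality (values in `[0,∞]`). -/
theorem weighted_contact_strong_triangle {K : Type*} [Field K] [IsAlgClosed K]
    [CharZero K] {d m n₁ n₂ n₃ : ℕ}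
    (A : IQOW K d m n₁) (B : IQOW K d m n₂) (C : IQOW K d m n₃)
    (ω : Fin d → ℝ) (hω : ∀ i, 0 < ω i) :
    let contW : ∀ {p q : ℕ}, IQOW K d m p → IQOW K d m q → ℝ≥0∞ :=
      fun P Q => (∑ i, ∑ j, ordW m ω (P.α i - Q.α j)) / ((P.f.natDegree * Q.f.natDegree : ℕ) : ℝ≥0∞)
    min (contW A C) (contW C B) ≤ contW A B := by
  intro contW
  show min ((∑ i, ∑ j, ordW m ω (A.α i - C.α j))
        / ((A.f.natDegree * C.f.natDegree : ℕ) : ℝ≥0∞))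
      ((∑ i, ∑ j, ordW m ω (C.α i - B.α j))
        / ((C.f.natDegree * B.f.natDegree : ℕ) : ℝ≥0∞))
    ≤ (∑ i, ∑ j, ordW m ω (A.α i - B.α j))
        / ((A.f.natDegree * B.f.natDegree : ℕ) : ℝ≥0∞)
  rw [A.degf, B.degf, C.degf]
  exact key (fun x y => ordW m ω (x - y))
    (fun (e : {ε : Fin d → K // mTor m ε}) x => twist e.1 x)
    (fun x y => ordW_sub_symm x y)
    (fun x y z => ordW_ultra x y z)
    (fun e x y => by
      show ordW m ω (twist e.1 x - twist e.1 y) = ordW m ω (x - y)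
      rw [← twist_sub, ordW_twist (fun i => (e.2).ne_zero A.hm i)])
    A.hn B.hn C.hn A.α B.α C.α
    (fun e => A.exists_perm e.2)
    (fun e => B.exists_perm e.2)
    (fun i i' => by
      obtain ⟨ε, hε, h⟩ := A.trans i i'
      exact ⟨⟨ε, hε⟩, h⟩)
    (fun j j' => by
      obtain ⟨ε, hε, h⟩ := B.trans j j'
      exact ⟨⟨ε, hε⟩, h⟩)
    (fun k k' => by
      obtain ⟨ε, hε, h⟩ := C.trans k k'
      exact ⟨⟨ε, hε⟩, h⟩)

end QOPaper
end
end

section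
/- There exist irreducible Weierstrass polynomials f, g, h ∈ K[[X_1,X_2]][Y], with f·h quasi-ordinary, for which the strong triangle inequality cont_A(f,g) ≥ inf{cont_A(f,h), cont_A(h,g)} fails; for instance f = Y − 2X_1³, g = (Y − X_1)(Y − X_1³ − X_1⁴) + X_2, h = Y − X_1³ give Res(f,g) = −2X_1⁷ + 2X_1⁶ + X_1⁵ − X_1⁴ + X_2, Res(f,h) = X_1³, Res(g,h) = −X_1⁷ + X_1⁵ + X_2, and Δ(Res(f,g))/2 is not contained in conv(Δ(Res(f,h)) ∪ Δ(Res(g,h))/2). -/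
open scoped Pointwise ENNReal

noncomputable section

namespace QOPaper


section Aux

open Polynomial

variable {K : Type*} [Field K] [CharZero K]

local notation "Av" => (MvPowerSeries.X 0 : MvPowerSeries (Fin 2) K)
local notation "Bv" => (MvPowerSeries.X 1 : MvPowerSeries (Fin 2) K)

lemma resultant_cast {R : Type*} [CommRing R] (f g : Polynomial R) (n : ℕ)
    (hn : f.natDegree + g.natDegree = n) :
    resultant f g =
      (Matrix.of fun i j : Fin n =>
        sylvester f g (Fin.cast hn.symm i) (Fin.cast hn.symm j)).det := by
  rw [resultant, ← Matrix.det_reindex_self (finCongr hn) (sylvester f g)]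
  rfl

lemma resultant_deg11 {R : Type*} [CommRing R] [Nontrivial R] (a b : R) :
    resultant (Polynomial.X - Polynomial.C a) (Polynomial.X - Polynomial.C b) = a - b := by
  have hf : (Polynomial.X - Polynomial.C a).natDegree = 1 := Polynomial.natDegree_X_sub_C a
  have hg : (Polynomial.X - Polynomial.C b).natDegree = 1 := Polynomial.natDegree_X_sub_C b
  rw [resultant_cast _ _ 2 (by rw [hf, hg])]
  rw [Matrix.det_fin_two]
  simp [sylvester, hf, hg, Polynomial.coeff_X, Polynomial.coeff_C]
  ring

lemma resultant_deg12 {R : Type*} [CommRing R] [Nontrivial R] (a p q : R) :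
    resultant (Polynomial.X - Polynomial.C a)
      (Polynomial.X ^ 2 + Polynomial.C p * Polynomial.X + Polynomial.C q) =
      q + p * a + a ^ 2 := by
  have hf : (Polynomial.X - Polynomial.C a).natDegree = 1 := Polynomial.natDegree_X_sub_C a
  have hg : (Polynomial.X ^ 2 + Polynomial.C p * Polynomial.X + Polynomial.C q).natDegree = 2 := by
    simpa using Polynomial.natDegree_quadratic (a := (1:R)) (b := p) (c := q) one_ne_zero
  rw [resultant_cast _ _ 3 (by rw [hf, hg])]
  rw [Matrix.det_fin_three]
  simp [sylvester, hf, hg, Polynomial.coeff_X, Polynomial.coeff_C, Polynomial.coeff_X_pow,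
    Polynomial.coeff_add, Polynomial.coeff_C_mul]
  ring

lemma resultant_deg21 {R : Type*} [CommRing R] [Nontrivial R] (p q b c : R) (hb : b ≠ 0) :
    resultant (Polynomial.X ^ 2 + Polynomial.C p * Polynomial.X + Polynomial.C q)
      (Polynomial.C b * Polynomial.X + Polynomial.C c) =
      c ^ 2 - p * b * c + q * b ^ 2 := by
  have hf : (Polynomial.X ^ 2 + Polynomial.C p * Polynomial.X + Polynomial.C q).natDegree = 2 := by
    simpa using Polynomial.natDegree_quadratic (a := (1:R)) (b := p) (c := q) one_ne_zero
  have hg : (Polynomial.C b * Polynomial.X + Polynomial.C c).natDegree = 1 :=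
    Polynomial.natDegree_linear hb
  rw [resultant_cast _ _ 3 (by rw [hf, hg])]
  rw [Matrix.det_fin_three]
  simp [sylvester, hf, hg, Polynomial.coeff_X, Polynomial.coeff_C, Polynomial.coeff_X_pow,
    Polynomial.coeff_add, Polynomial.coeff_C_mul]
  ring

lemma deriv_quad {R : Type*} [CommRing R] (b c : R) :
    Polynomial.derivative (Polynomial.X^2 + Polynomial.C b * Polynomial.X + Polynomial.C c)
      = Polynomial.C 2 * Polynomial.X + Polynomial.C b := by
  simp [Polynomial.derivative_X_pow]
  rw [one_add_one_eq_two, map_ofNat]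

lemma quad_deg {R : Type*} [CommRing R] [Nontrivial R] (b c : R) :
    (Polynomial.X^2 + Polynomial.C b * Polynomial.X + Polynomial.C c).natDegree = 2 := by
  simpa using Polynomial.natDegree_quadratic (a := (1:R)) (b := b) (c := c) one_ne_zero

lemma quad_inj {R : Type*} [CommRing R] (b c b' c' : R)
    (h : Polynomial.X^2 + Polynomial.C b * Polynomial.X + Polynomial.C c
       = Polynomial.X^2 + Polynomial.C b' * Polynomial.X + Polynomial.C c') :
    b = b' ∧ c = c' := by
  constructor
  · have := congrArg (fun r => Polynomial.coeff r 1) h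
    simpa using this
  · have := congrArg (fun r => Polynomial.coeff r 0) h
    simpa using this

lemma sq_coeff (r : MvPowerSeries (Fin 2) K) (h0 : MvPowerSeries.coeff 0 (r*r) = 0) :
    MvPowerSeries.coeff (Finsupp.single 1 1) (r*r) = 0 := by
  have hr0 : MvPowerSeries.coeff 0 r = 0 := by
    rw [MvPowerSeries.coeff_mul] at h0
    simp only [Finsupp.antidiagonal_zero, Finset.sum_singleton] at h0
    exact pow_eq_zero_iff (n := 2) (by norm_num) |>.mp (by rw [sq]; exact h0)
  rw [MvPowerSeries.coeff_mul, Finsupp.antidiagonal_single, Finset.sum_map]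
  have : (Finset.HasAntidiagonal.antidiagonal (1:ℕ)) = {(0,1),(1,0)} := rfl
  rw [this, Finset.sum_pair (by decide)]
  simp [hr0, Finsupp.single_zero]

lemma g_eq : (Polynomial.X - Polynomial.C Av) * (Polynomial.X - Polynomial.C (Av^3 + Av^4)) +
        Polynomial.C Bv = Polynomial.X^2 + Polynomial.C (-(Av + (Av^3+Av^4))) * Polynomial.X
        + Polynomial.C (Av*(Av^3+Av^4) + Bv) := by
  simp only [map_add, map_mul, map_neg]; ring

lemma single11_coeffs :
    MvPowerSeries.coeff (Finsupp.single 1 1) ((Av + (Av^3+Av^4)) * (Av + (Av^3+Av^4))) = 0 ∧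
    MvPowerSeries.coeff (Finsupp.single 1 1) (Av*(Av^3+Av^4) + Bv) = 1 := by
  have hcc : MvPowerSeries.coeff (0 : Fin 2 →₀ ℕ) (Av + (Av^3+Av^4)) = 0 := by
    simp [MvPowerSeries.coeff_zero_eq_constantCoeff, map_add, map_pow,
      MvPowerSeries.constantCoeff_X]
  constructor
  · rw [MvPowerSeries.coeff_mul, Finsupp.antidiagonal_single, Finset.sum_map]
    have h2 : (Finset.HasAntidiagonal.antidiagonal (1:ℕ)) = {(0,1),(1,0)} := rfl
    rw [h2, Finset.sum_pair (by decide)]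
    simp only [Function.Embedding.coe_prodMap, Function.Embedding.coeFn_mk, Prod.map_apply,
      Finsupp.single_zero]
    rw [hcc]
    ring
  · rw [map_add]
    have h1 : MvPowerSeries.coeff (Finsupp.single 1 1) (Av*(Av^3+Av^4)) = 0 := by
      rw [MvPowerSeries.coeff_mul, Finsupp.antidiagonal_single, Finset.sum_map]
      have h2 : (Finset.HasAntidiagonal.antidiagonal (1:ℕ)) = {(0,1),(1,0)} := rfl
      rw [h2, Finset.sum_pair (by decide)]
      simp only [Function.Embedding.coe_prodMap, Function.Embedding.coeFn_mk, Prod.map_apply,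
        Finsupp.single_zero]
      have : MvPowerSeries.coeff (0 : Fin 2 →₀ ℕ) ((Av^3+Av^4)) = 0 := by
        simp [MvPowerSeries.coeff_zero_eq_constantCoeff, map_add, map_pow,
          MvPowerSeries.constantCoeff_X]
      rw [this, MvPowerSeries.coeff_zero_X]
      ring
    rw [h1]
    simp [MvPowerSeries.coeff_X, Finsupp.single_eq_single_iff]

lemma g_irred :
    ∀ p q : Polynomial (MvPowerSeries (Fin 2) K), p.Monic → q.Monic →
      (Polynomial.X - Polynomial.C Av) * (Polynomial.X - Polynomial.C (Av^3 + Av^4)) +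
        Polynomial.C Bv = p * q →
      p.natDegree = 0 ∨ q.natDegree = 0 := by
  intro p q hp hq heq
  by_contra hcon
  push_neg at hcon
  obtain ⟨hp0, hq0⟩ := hcon
  have hdeg : p.natDegree + q.natDegree = 2 := by
    rw [← hp.natDegree_mul hq, ← heq, g_eq, quad_deg]
  have hp1 : p.natDegree = 1 := by omega
  have hq1 : q.natDegree = 1 := by omega
  set c := p.coeff 0
  set e := q.coeff 0
  have hpX : p = Polynomial.X + Polynomial.C c := hp.eq_X_add_C hp1
  have hqX : q = Polynomial.X + Polynomial.C e := hq.eq_X_add_C hq1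
  rw [hpX, hqX, g_eq] at heq
  have hexp : (Polynomial.X + Polynomial.C c) * (Polynomial.X + Polynomial.C e)
      = Polynomial.X^2 + Polynomial.C (c + e) * Polynomial.X + Polynomial.C (c * e) := by
    simp only [map_add, map_mul]; ring
  rw [hexp] at heq
  obtain ⟨h1, h0⟩ := quad_inj _ _ _ _ heq
  set w := c - e with hw
  have hsq : w * w = (Av + (Av^3+Av^4)) * (Av + (Av^3+Av^4)) - 4 * (Av*(Av^3+Av^4) + Bv) := by
    rw [hw]
    have : (c - e) * (c - e) = (c+e)*(c+e) - 4*(c*e) := by ring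
    rw [this, ← h1, ← h0]; ring
  have hc0 : MvPowerSeries.coeff 0 (w * w) = 0 := by
    rw [MvPowerSeries.coeff_zero_eq_constantCoeff, hsq]
    simp [map_sub, map_mul, map_add, map_pow, MvPowerSeries.constantCoeff_X]
  have hkey := sq_coeff w hc0
  rw [hsq, map_sub] at hkey
  obtain ⟨hm0, hab⟩ := (single11_coeffs (K := K))
  have h4 : MvPowerSeries.coeff (Finsupp.single 1 1)
      ((4:MvPowerSeries (Fin 2) K) * (Av*(Av^3+Av^4) + Bv)) = 4 := by
    have : (4 : MvPowerSeries (Fin 2) K) * (Av*(Av^3+Av^4) + Bv)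
        = (Av*(Av^3+Av^4) + Bv) + (Av*(Av^3+Av^4) + Bv)
          + ((Av*(Av^3+Av^4) + Bv) + (Av*(Av^3+Av^4) + Bv)) := by
      ring
    rw [this]
    simp only [map_add, hab]
    norm_num
  rw [hm0, h4] at hkey
  norm_num at hkey

/-- The separating linear form. -/
noncomputable def Lform : (Fin 2 → ℝ) → ℝ := fun v => v 0 + 5 * v 1

lemma Lform_lin : IsLinearMap ℝ Lform := by
  constructor
  · intro x y; simp [Lform]; ring
  · intro c x; simp [Lform, smul_eq_mul]; ring

lemma NP_not_subset_core :
    ¬ (((1:ℝ)/2) • NewtonPolytope 1 (-(Av^4) + Av^5 + 2*Av^6 - 2*Av^7 + Bv) ⊆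
        convexHull ℝ (((1:ℝ) • NewtonPolytope 1 (Av^3)) ∪
          (((1:ℝ)/2) • NewtonPolytope 1 (Av^5 - Av^7 + Bv)))) := by
  intro hsub
  set p4 : Fin 2 → ℝ := fun i => if i = 0 then 4 else 0 with hp4
  have hp4mem : p4 ∈ NewtonPolytope 1 (-(Av^4) + Av^5 + 2*Av^6 - 2*Av^7 + Bv) := by
    apply subset_convexHull
    refine ⟨Finsupp.single 0 4, ?_, ?_⟩
    · have h2 : (2:MvPowerSeries (Fin 2) K)*Av^6 = Av^6 + Av^6 := by ring
      have h2' : (2:MvPowerSeries (Fin 2) K)*Av^7 = Av^7 + Av^7 := by ring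
      simp [h2, h2', MvPowerSeries.coeff_X_pow, MvPowerSeries.coeff_X,
        Finsupp.single_eq_single_iff]
    · intro i
      fin_cases i <;> simp [p4]
  have hv : ((1:ℝ)/2) • p4 ∈ convexHull ℝ (((1:ℝ) • NewtonPolytope 1 (Av^3)) ∪
      (((1:ℝ)/2) • NewtonPolytope 1 (Av^5 - Av^7 + Bv))) :=
    hsub (Set.smul_mem_smul_set hp4mem)
  have hfh : NewtonPolytope 1 (Av^3 : MvPowerSeries (Fin 2) K) ⊆ {x | (3:ℝ) ≤ Lform x} := by
    apply convexHull_min _ (convex_halfSpace_ge Lform_lin 3)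
    rintro p ⟨a, ha, hle⟩
    have haeq : a = Finsupp.single 0 3 := by
      by_contra hne
      simp [MvPowerSeries.coeff_X_pow, hne] at ha
    subst haeq
    have h0 := hle 0
    have h1 := hle 1
    simp at h0 h1
    simp only [Lform, Set.mem_setOf_eq]
    nlinarith
  have hhg : NewtonPolytope 1 (Av^5 - Av^7 + Bv : MvPowerSeries (Fin 2) K) ⊆
      {x | (5:ℝ) ≤ Lform x} := by
    apply convexHull_min _ (convex_halfSpace_ge Lform_lin 5)
    rintro p ⟨a, ha, hle⟩
    have haeq : a = Finsupp.single 0 5 ∨ a = Finsupp.single 0 7 ∨ a = Finsupp.single 1 1 := by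
      by_contra hcc
      push_neg at hcc
      obtain ⟨h1, h2, h3⟩ := hcc
      simp [MvPowerSeries.coeff_X_pow, MvPowerSeries.coeff_X, h1, h2, h3] at ha
    have h0 := hle 0
    have h1 := hle 1
    simp only [Lform, Set.mem_setOf_eq]
    rcases haeq with rfl | rfl | rfl <;> simp at h0 h1 <;> nlinarith
  have hU : (((1:ℝ) • NewtonPolytope 1 (Av^3 : MvPowerSeries (Fin 2) K)) ∪
      (((1:ℝ)/2) • NewtonPolytope 1 (Av^5 - Av^7 + Bv : MvPowerSeries (Fin 2) K))) ⊆
      {x | (5/2:ℝ) ≤ Lform x} := by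
    rintro x (hx | hx)
    · rw [one_smul] at hx
      have := hfh hx
      simp only [Set.mem_setOf_eq] at this ⊢
      linarith
    · obtain ⟨y, hy, rfl⟩ := hx
      have := hhg hy
      simp only [Set.mem_setOf_eq] at this ⊢
      have hL : Lform (((1:ℝ)/2) • y) = (1/2) * Lform y := by
        simp [Lform, Pi.smul_apply, smul_eq_mul]; ring
      rw [hL]; linarith
  have hhull := convexHull_min hU (convex_halfSpace_ge Lform_lin (5/2)) hv
  simp only [Set.mem_setOf_eq] at hhull
  have : Lform (((1:ℝ)/2) • p4) = 2 := by
    simp [Lform, Pi.smul_apply, smul_eq_mul, p4]; norm_num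
  rw [this] at hhull
  norm_num at hhull

lemma two_ne_zero_mv : (2 : MvPowerSeries (Fin 2) K) ≠ 0 := by
  intro hcon
  have := congrArg (MvPowerSeries.constantCoeff) hcon
  rw [show (2 : MvPowerSeries (Fin 2) K) = 1 + 1 by norm_num, map_add, map_one, map_zero] at this
  norm_num at this

end Aux

/-- Example 2 of Section 4.  The strong triangle inequality for
the logarithmic distance fails for general irreducible Weierstrass polynomials, even
when `f·h` is quasi-ordinary: there exist irreducible Weierstrass polynomials
`f, g, h ∈ K[[X₁,X₂]][Y]` — for instance `f = Y − 2X₁³`,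
`g = (Y − X₁)(Y − X₁³ − X₁⁴) + X₂`, `h = Y − X₁³` — with `f·h` quasi-ordinary and
`cont_A(f,g) = (1/(deg f · deg g))Δ(Res(f,g))` not contained in
`conv(cont_A(f,h) ∪ cont_A(h,g))`. -/
theorem logarithmic_distance_triangle_fails {K : Type*} [Field K] [IsAlgClosed K]
    [CharZero K] :
    ∃ f g h : Polynomial (MvPowerSeries (Fin 2) K),
      f = Polynomial.X - Polynomial.C (2 * (MvPowerSeries.X 0) ^ 3) ∧
      g = (Polynomial.X - Polynomial.C (MvPowerSeries.X 0)) *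
            (Polynomial.X - Polynomial.C
              ((MvPowerSeries.X 0) ^ 3 + (MvPowerSeries.X 0) ^ 4)) +
          Polynomial.C (MvPowerSeries.X 1) ∧
      h = Polynomial.X - Polynomial.C ((MvPowerSeries.X 0) ^ 3) ∧
      IsWeierstrass f ∧ IsWeierstrass g ∧ IsWeierstrass h ∧
      IrreducibleOverKX 1 f ∧ IrreducibleOverKX 1 g ∧ IrreducibleOverKX 1 h ∧
      IsQuasiOrdinaryPoly (f * h) ∧
      ¬ (((1 : ℝ) / ((f.natDegree * g.natDegree : ℕ) : ℝ)) •
            NewtonPolytope 1 (resultant f g) ⊆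
          convexHull ℝ
            ((((1 : ℝ) / ((f.natDegree * h.natDegree : ℕ) : ℝ)) •
                NewtonPolytope 1 (resultant f h)) ∪
              (((1 : ℝ) / ((h.natDegree * g.natDegree : ℕ) : ℝ)) •
                NewtonPolytope 1 (resultant h g)))) := by
  classical
  refine ⟨_, _, _, rfl, rfl, rfl, ?_, ?_, ?_, ?_, ?_, ?_, ?_, ?_⟩
  · -- f Weierstrass
    refine ⟨Polynomial.monic_X_sub_C _, ?_, ?_⟩
    · rw [Polynomial.natDegree_X_sub_C]; norm_num
    · intro i hi
      rw [Polynomial.natDegree_X_sub_C] at hi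
      interval_cases i
      rw [Polynomial.coeff_sub, Polynomial.coeff_X_zero, Polynomial.coeff_C_zero]
      simp [map_sub, map_mul, map_pow, MvPowerSeries.constantCoeff_X]
  · -- g Weierstrass
    rw [g_eq]
    refine ⟨?_, ?_, ?_⟩
    · have hre : Polynomial.X^2
          + Polynomial.C (-((MvPowerSeries.X 0 : MvPowerSeries (Fin 2) K)
            + ((MvPowerSeries.X 0)^3+(MvPowerSeries.X 0)^4))) * Polynomial.X
          + Polynomial.C ((MvPowerSeries.X 0)*((MvPowerSeries.X 0)^3+(MvPowerSeries.X 0)^4)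
            + MvPowerSeries.X 1)
          = Polynomial.X^2
          + (Polynomial.C (-((MvPowerSeries.X 0 : MvPowerSeries (Fin 2) K)
            + ((MvPowerSeries.X 0)^3+(MvPowerSeries.X 0)^4))) * Polynomial.X
          + Polynomial.C ((MvPowerSeries.X 0)*((MvPowerSeries.X 0)^3+(MvPowerSeries.X 0)^4)
            + MvPowerSeries.X 1)) := by ring
      rw [hre]
      exact Polynomial.monic_X_pow_add
        (lt_of_le_of_lt (Polynomial.degree_linear_le) (by norm_num))
    · rw [quad_deg]; norm_num
    · intro i hi
      rw [quad_deg] at hi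
      interval_cases i
      · rw [Polynomial.coeff_add, Polynomial.coeff_add, Polynomial.coeff_C_zero,
          Polynomial.coeff_C_mul, Polynomial.coeff_X_zero, mul_zero]
        simp [map_add, map_mul, map_pow, MvPowerSeries.constantCoeff_X,
          Polynomial.coeff_X_pow]
      · rw [Polynomial.coeff_add, Polynomial.coeff_add, Polynomial.coeff_C_mul,
          Polynomial.coeff_X_one, mul_one]
        simp [map_add, map_neg, map_mul, map_pow, MvPowerSeries.constantCoeff_X,
          Polynomial.coeff_X_pow, Polynomial.coeff_C]
  · -- h Weierstrass
    refine ⟨Polynomial.monic_X_sub_C _, ?_, ?_⟩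
    · rw [Polynomial.natDegree_X_sub_C]; norm_num
    · intro i hi
      rw [Polynomial.natDegree_X_sub_C] at hi
      interval_cases i
      rw [Polynomial.coeff_sub, Polynomial.coeff_X_zero, Polynomial.coeff_C_zero]
      simp [map_sub, map_pow, MvPowerSeries.constantCoeff_X]
  · -- f irreducible
    refine ⟨by rw [Polynomial.natDegree_X_sub_C]; norm_num, ?_⟩
    intro p q hp hq _ _ heq
    have := hp.natDegree_mul hq
    rw [← heq, Polynomial.natDegree_X_sub_C] at this
    omega
  · -- g irreducible
    refine ⟨by rw [g_eq, quad_deg]; norm_num, ?_⟩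
    intro p q hp hq _ _ heq
    exact g_irred p q hp hq heq
  · -- h irreducible
    refine ⟨by rw [Polynomial.natDegree_X_sub_C]; norm_num, ?_⟩
    intro p q hp hq _ _ heq
    have := hp.natDegree_mul hq
    rw [← heq, Polynomial.natDegree_X_sub_C] at this
    omega
  · -- f * h quasi-ordinary
    have hfh : (Polynomial.X - Polynomial.C (2*(MvPowerSeries.X 0 : MvPowerSeries (Fin 2) K)^3))
        * (Polynomial.X - Polynomial.C ((MvPowerSeries.X 0)^3))
        = Polynomial.X^2
          + Polynomial.C (-(3*(MvPowerSeries.X 0 : MvPowerSeries (Fin 2) K)^3)) * Polynomial.X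
          + Polynomial.C (2*(MvPowerSeries.X 0)^6) := by
      simp only [map_add, map_neg, map_mul, map_pow, map_ofNat]
      ring
    refine ⟨Finsupp.single 0 6, -1, by simp, ?_⟩
    rw [hfh, deriv_quad, resultant_deg21 _ _ _ _ two_ne_zero_mv, ← MvPowerSeries.X_pow_eq]
    ring
  · -- failure of the strong triangle inequality
    have hRfg : resultant
        (Polynomial.X - Polynomial.C (2*(MvPowerSeries.X 0 : MvPowerSeries (Fin 2) K)^3))
        ((Polynomial.X - Polynomial.C (MvPowerSeries.X 0)) *
          (Polynomial.X - Polynomial.C ((MvPowerSeries.X 0)^3 + (MvPowerSeries.X 0)^4)) +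
          Polynomial.C (MvPowerSeries.X 1))
        = -((MvPowerSeries.X 0 : MvPowerSeries (Fin 2) K)^4) + (MvPowerSeries.X 0)^5
          + 2*(MvPowerSeries.X 0)^6 - 2*(MvPowerSeries.X 0)^7 + MvPowerSeries.X 1 := by
      rw [g_eq, resultant_deg12]; ring
    have hRfh : resultant
        (Polynomial.X - Polynomial.C (2*(MvPowerSeries.X 0 : MvPowerSeries (Fin 2) K)^3))
        (Polynomial.X - Polynomial.C ((MvPowerSeries.X 0)^3))
        = (MvPowerSeries.X 0 : MvPowerSeries (Fin 2) K)^3 := by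
      rw [resultant_deg11]; ring
    have hRhg : resultant
        (Polynomial.X - Polynomial.C ((MvPowerSeries.X 0 : MvPowerSeries (Fin 2) K)^3))
        ((Polynomial.X - Polynomial.C (MvPowerSeries.X 0)) *
          (Polynomial.X - Polynomial.C ((MvPowerSeries.X 0)^3 + (MvPowerSeries.X 0)^4)) +
          Polynomial.C (MvPowerSeries.X 1))
        = (MvPowerSeries.X 0 : MvPowerSeries (Fin 2) K)^5 - (MvPowerSeries.X 0)^7
          + MvPowerSeries.X 1 := by
      rw [g_eq, resultant_deg12]; ring
    have hfd : (Polynomial.X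
        - Polynomial.C (2*(MvPowerSeries.X 0 : MvPowerSeries (Fin 2) K)^3)).natDegree = 1 :=
      Polynomial.natDegree_X_sub_C _
    have hhd : (Polynomial.X
        - Polynomial.C ((MvPowerSeries.X 0 : MvPowerSeries (Fin 2) K)^3)).natDegree = 1 :=
      Polynomial.natDegree_X_sub_C _
    have hgd : ((Polynomial.X - Polynomial.C (MvPowerSeries.X 0 : MvPowerSeries (Fin 2) K)) *
          (Polynomial.X - Polynomial.C ((MvPowerSeries.X 0)^3 + (MvPowerSeries.X 0)^4)) +
          Polynomial.C (MvPowerSeries.X 1)).natDegree = 2 := by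
      rw [g_eq, quad_deg]
    rw [hRfg, hRfh, hRhg, hfd, hhd, hgd]
    have e1 : ((1:ℝ) / (((1*2 : ℕ) : ℝ))) = (1:ℝ)/2 := by norm_num
    have e2 : ((1:ℝ) / (((1*1 : ℕ) : ℝ))) = (1:ℝ) := by norm_num
    rw [e1, e2]
    exact NP_not_subset_core


end QOPaper
end
end
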